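/- arXiv:1903.05642 — 4 statements merged into one kernel-verified Lean document; each statement's English description precedes it below -/
import Mathlib

section
/- For every $x \in [0,1]$, positive integers $k$ and $n$, if $B_1^x, \dots, B_k^x$ are i.i.d. Bernoulli random variables with parameter $x$, and $W^{k,n}$ is the number of non-empty boxes when $n$ balls are placed independently uniformly at random into $k$ boxes, then $\mathbb{E}\left[\left(\frac{1}{k}\sum_{i=1}^{k} B_i^x\right)^n\right] = \mathbb{E}\left[x^{W^{k,n}}\right]$. -/
open Finset

lemma bernoulli_indicator_sum (x : ℝ) (k : ℕ) (s : Finset (Fin k)) :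
    ∑ ω : Fin k → Bool, (∏ i, (if ω i then x else 1 - x)) *
        (∏ i ∈ s, (if ω i then (1 : ℝ) else 0)) = x ^ s.card := by
  have h1 : ∀ ω : Fin k → Bool,
      (∏ i, (if ω i then x else 1 - x)) * (∏ i ∈ s, (if ω i then (1 : ℝ) else 0))
      = ∏ i, ((if ω i then x else 1 - x) *
          (if i ∈ s then (if ω i then (1 : ℝ) else 0) else 1)) := by
    intro ω
    rw [Finset.prod_mul_distrib]
    congr 1
    rw [Finset.prod_ite_mem, Finset.univ_inter]
  simp only [h1]
  have h2 : (∑ ω : Fin k → Bool, ∏ i, ((if ω i then x else 1 - x) *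
      (if i ∈ s then (if ω i then (1 : ℝ) else 0) else 1)))
      = ∏ i : Fin k, ∑ b : Bool, ((if b then x else 1 - x) *
        (if i ∈ s then (if b then (1 : ℝ) else 0) else 1)) := by
    rw [Finset.prod_univ_sum]
    rw [← Fintype.piFinset_univ]
  rw [h2]
  have h3 : ∀ i : Fin k, (∑ b : Bool, ((if b then x else 1 - x) *
      (if i ∈ s then (if b then (1 : ℝ) else 0) else 1)))
      = if i ∈ s then x else 1 := by
    intro i
    by_cases hi : i ∈ s <;> simp [hi]
  simp only [h3]
  rw [Finset.prod_ite_mem, Finset.univ_inter, Finset.prod_const]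

/-- For `x ∈ [0,1]` and positive integers `k, n`, if `B₁,…,B_k` are i.i.d.
Bernoulli(`x`) random variables (modeled by `ω : Fin k → Bool` with product Bernoulli
weights) and `W^{k,n}` is the number of non-empty boxes when `n` balls are placed
independently and uniformly at random into `k` boxes (modeled by a uniform
`f : Fin n → Fin k`, with `W = |image f|`), then
`E[((1/k) ∑ Bᵢ)^n] = E[x^{W^{k,n}}]`. -/
theorem bernoulli_moment_eq_occupancy (x : ℝ) (hx0 : 0 ≤ x) (hx1 : x ≤ 1)
    (k n : ℕ) (hk : 0 < k) (hn : 0 < n) :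
    ∑ ω : Fin k → Bool,
        (∏ i, (if ω i then x else 1 - x)) *
          ((∑ i, (if ω i then (1 : ℝ) else 0)) / (k : ℝ)) ^ n
    = (∑ f : Fin n → Fin k, x ^ (Finset.image f Finset.univ).card) / (k : ℝ) ^ n := by
  have hkpos : (0:ℝ) < (k:ℝ)^n := by positivity
  rw [eq_div_iff (ne_of_gt hkpos)]
  have expand : ∀ ω : Fin k → Bool,
      ((∑ i, (if ω i then (1 : ℝ) else 0)) / (k : ℝ)) ^ n * (k:ℝ)^n
      = ∑ f : Fin n → Fin k, ∏ j, (if ω (f j) then (1:ℝ) else 0) := by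
    intro ω
    rw [div_pow, div_mul_cancel₀ _ (ne_of_gt hkpos)]
    rw [Finset.sum_pow', Fintype.piFinset_univ]
  calc (∑ ω : Fin k → Bool,
        (∏ i, (if ω i then x else 1 - x)) *
          ((∑ i, (if ω i then (1 : ℝ) else 0)) / (k : ℝ)) ^ n) * (k:ℝ)^n
      = ∑ ω : Fin k → Bool, ∑ f : Fin n → Fin k,
          (∏ i, (if ω i then x else 1 - x)) * ∏ j, (if ω (f j) then (1:ℝ) else 0) := by
        rw [Finset.sum_mul]
        refine Finset.sum_congr rfl fun ω _ => ?_
        rw [mul_assoc, expand ω, Finset.mul_sum]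
    _ = ∑ f : Fin n → Fin k, ∑ ω : Fin k → Bool,
          (∏ i, (if ω i then x else 1 - x)) *
            ∏ i ∈ Finset.image f Finset.univ, (if ω i then (1:ℝ) else 0) := by
        rw [Finset.sum_comm]
        refine Finset.sum_congr rfl fun f _ => Finset.sum_congr rfl fun ω _ => ?_
        congr 1
        rw [Finset.prod_boole, Finset.prod_boole]
        congr 1
        rw [eq_iff_iff]
        constructor
        · intro h i hi
          obtain ⟨j, _, rfl⟩ := Finset.mem_image.mp hi
          exact h j (Finset.mem_univ j)
        · intro h j _
          exact h (f j) (Finset.mem_image_of_mem f (Finset.mem_univ j))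
    _ = ∑ f : Fin n → Fin k, x ^ (Finset.image f Finset.univ).card := by
        exact Finset.sum_congr rfl fun f _ => bernoulli_indicator_sum x k _
end

section
/- Let $\beta \in (0,1)$ and define $\lambda_n = \sum_{k=1}^{\infty} k^{-\beta} \mathbb{P}(\mathcal{C}^k_n)$, where $\mathcal{C}^k_n$ is the event that at least two of $n$ balls thrown uniformly at random into $k$ boxes share a box. Then $\lim_{n \to \infty} n^{2(\beta - 1)} \lambda_n = \frac{2^{\beta - 1}\Gamma(\beta)}{1 - \beta}$. -/
open Filter

/-- The probability that at least two of `n` balls thrown uniformly at random into `k`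
boxes share a box: it equals `1` if `n > k` and `1 - ∏_{i=2}^n (k+1-i)/k` if `n ≤ k`. -/
noncomputable def collisionProb (k n : ℕ) : ℝ :=
  if k < n then 1 else 1 - ∏ i ∈ Finset.Icc 2 n, ((k : ℝ) + 1 - (i : ℝ)) / (k : ℝ)


open Real Set MeasureTheory Topology

set_option maxHeartbeats 1000000

namespace TRA

lemma exp_quarter {x : ℝ} (h0 : 0 ≤ x) (h4 : x ≤ 1/4) :
    Real.exp (-(x + x^2)) ≤ 1 - x := by
  have h1 : 1 + (x + x^2)/2 ≤ Real.exp ((x + x^2)/2) := by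
    simpa [add_comm] using Real.add_one_le_exp ((x + x^2)/2)
  have h2 : (1 + (x + x^2)/2)^2 ≤ Real.exp (x + x^2) := by
    have hx2 : Real.exp (x + x^2) = (Real.exp ((x+x^2)/2))^2 := by
      rw [show x + x^2 = (x+x^2)/2 + (x+x^2)/2 by ring, Real.exp_add]; ring
    rw [hx2]
    have hp : 0 ≤ 1 + (x + x^2)/2 := by nlinarith
    exact pow_le_pow_left₀ hp h1 2
  have e1 : x^3 ≤ x^2 * (1/4) := by nlinarith [sq_nonneg x]
  have e2 : x^4 ≤ x^3 * (1/4) := by nlinarith [pow_nonneg h0 3]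
  have e3 : x^5 ≤ x^4 * (1/4) := by nlinarith [pow_nonneg h0 4]
  have h3 : 1 ≤ (1 - x) * (1 + (x + x^2)/2)^2 := by nlinarith [sq_nonneg x]
  have h5 : Real.exp (-(x+x^2)) = (Real.exp (x+x^2))⁻¹ := by
    rw [← Real.exp_neg]
  rw [h5, inv_le_iff_one_le_mul₀ (Real.exp_pos _)]
  nlinarith [h2, h3, Real.exp_pos (x+x^2), h0, h4]

lemma sum_Icc_id (n : ℕ) : ∑ i ∈ Finset.Icc 2 n, ((i:ℝ) - 1) = (n:ℝ) * ((n:ℝ) - 1) / 2 := by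
  induction n with
  | zero => simp
  | succ m ih =>
    rcases Nat.lt_or_ge m 1 with hm | hm
    · interval_cases m
      · norm_num
    · rw [Finset.sum_Icc_succ_top (by omega : 2 ≤ m + 1), ih]
      push_cast; ring

lemma sum_Icc_sq_le (n : ℕ) : ∑ i ∈ Finset.Icc 2 n, ((i:ℝ) - 1)^2 ≤ (n:ℝ)^3 := by
  calc ∑ i ∈ Finset.Icc 2 n, ((i:ℝ) - 1)^2 ≤ (Finset.Icc 2 n).card • ((n:ℝ)^2) := by
        apply Finset.sum_le_card_nsmul
        intro i hi
        simp only [Finset.mem_Icc] at hi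
        have h1 : (1:ℝ) ≤ (i:ℝ) := by exact_mod_cast Nat.one_le_iff_ne_zero.mpr (by omega)
        have h2 : (i:ℝ) ≤ (n:ℝ) := by exact_mod_cast hi.2
        nlinarith
    _ = ((n + 1 - 2 : ℕ) : ℝ) * (n:ℝ)^2 := by rw [nsmul_eq_mul, Nat.card_Icc]
    _ ≤ (n:ℝ) * (n:ℝ)^2 := by
        apply mul_le_mul_of_nonneg_right _ (by positivity)
        exact_mod_cast (by omega : n + 1 - 2 ≤ n)
    _ = (n:ℝ)^3 := by ring

lemma prod_nonneg' {k n : ℕ} (hkn : n ≤ k) :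
    0 ≤ ∏ i ∈ Finset.Icc 2 n, ((k : ℝ) + 1 - (i : ℝ)) / (k : ℝ) := by
  apply Finset.prod_nonneg
  intro i hi
  simp only [Finset.mem_Icc] at hi
  have h2 : (i:ℝ) ≤ (k:ℝ) := by exact_mod_cast hi.2.trans hkn
  have h0 : (0:ℝ) < (k:ℝ) := by
    have : 2 ≤ k := le_trans hi.1 (hi.2.trans hkn)
    exact_mod_cast by omega
  apply div_nonneg (by linarith) h0.le

lemma prod_le_one' {k n : ℕ} (hkn : n ≤ k) :
    ∏ i ∈ Finset.Icc 2 n, ((k : ℝ) + 1 - (i : ℝ)) / (k : ℝ) ≤ 1 := by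
  apply Finset.prod_le_one
  · intro i hi
    simp only [Finset.mem_Icc] at hi
    have h2 : (i:ℝ) ≤ (k:ℝ) := by exact_mod_cast hi.2.trans hkn
    have h0 : (0:ℝ) < (k:ℝ) := by
      have : 2 ≤ k := le_trans hi.1 (hi.2.trans hkn)
      exact_mod_cast by omega
    apply div_nonneg (by linarith) h0.le
  · intro i hi
    simp only [Finset.mem_Icc] at hi
    have h1 : (2:ℝ) ≤ (i:ℝ) := by exact_mod_cast hi.1
    have h0 : (0:ℝ) < (k:ℝ) := by
      have : 2 ≤ k := le_trans hi.1 (hi.2.trans hkn)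
      exact_mod_cast by omega
    rw [div_le_one h0]; linarith

lemma collisionProb_nonneg (k n : ℕ) : 0 ≤ collisionProb k n := by
  unfold collisionProb
  split_ifs with h
  · norm_num
  · push_neg at h
    linarith [prod_le_one' h]

lemma collisionProb_le_one (k n : ℕ) : collisionProb k n ≤ 1 := by
  unfold collisionProb
  split_ifs with h
  · exact le_rfl
  · push_neg at h
    linarith [prod_nonneg' h]


lemma factor_eq {k i : ℕ} (hk : (0:ℝ) < (k:ℝ)) :
    ((k : ℝ) + 1 - (i : ℝ)) / (k : ℝ) = 1 - ((i:ℝ) - 1) / (k:ℝ) := by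
  field_simp; ring

lemma collisionProb_ge (n k : ℕ) :
    1 - Real.exp (-(((n:ℝ) * ((n:ℝ)-1) / 2) / (k:ℝ))) ≤ collisionProb k n := by
  unfold collisionProb
  split_ifs with h
  · linarith [Real.exp_nonneg (-(((n:ℝ) * ((n:ℝ)-1) / 2) / (k:ℝ)))]
  · push_neg at h
    have key : ∏ i ∈ Finset.Icc 2 n, ((k : ℝ) + 1 - (i : ℝ)) / (k : ℝ)
        ≤ Real.exp (-(((n:ℝ) * ((n:ℝ)-1) / 2) / (k:ℝ))) := by
      rcases Nat.lt_or_ge n 2 with hn | hn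
      · interval_cases n <;> simp [Finset.Icc_eq_empty_of_lt]
      · have hk0 : (0:ℝ) < (k:ℝ) := by
          have : 2 ≤ k := hn.trans h
          exact_mod_cast by omega
        calc ∏ i ∈ Finset.Icc 2 n, ((k : ℝ) + 1 - (i : ℝ)) / (k : ℝ)
            ≤ ∏ i ∈ Finset.Icc 2 n, Real.exp (-(((i:ℝ) - 1) / (k:ℝ))) := by
              apply Finset.prod_le_prod
              · intro i hi
                simp only [Finset.mem_Icc] at hi
                have h2 : (i:ℝ) ≤ (k:ℝ) := by exact_mod_cast hi.2.trans h
                apply div_nonneg (by linarith) hk0.le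
              · intro i hi
                rw [factor_eq hk0]
                have := Real.add_one_le_exp (-(((i:ℝ) - 1) / (k:ℝ)))
                linarith
          _ = Real.exp (∑ i ∈ Finset.Icc 2 n, -(((i:ℝ) - 1) / (k:ℝ))) := (Real.exp_sum _ _).symm
          _ = Real.exp (-(((n:ℝ) * ((n:ℝ)-1) / 2) / (k:ℝ))) := by
              congr 1
              rw [Finset.sum_neg_distrib, neg_inj, ← Finset.sum_div, sum_Icc_id]
    linarith

lemma collisionProb_le {n k : ℕ} (hn : 1 ≤ n) (hk : 4*n ≤ k) :
    collisionProb k n ≤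
      (1 - Real.exp (-(((n:ℝ) * ((n:ℝ)-1) / 2) / (k:ℝ)))) + (n:ℝ)^3 / (k:ℝ)^2 := by
  have hkn : n ≤ k := le_trans (by omega) hk
  have hk0 : (0:ℝ) < (k:ℝ) := by
    have : 4 ≤ k := le_trans (by omega) hk
    exact_mod_cast by omega
  have hk4n : (4:ℝ) * (n:ℝ) ≤ (k:ℝ) := by exact_mod_cast hk
  have hn1 : (1:ℝ) ≤ (n:ℝ) := by exact_mod_cast hn
  unfold collisionProb
  rw [if_neg (by omega)]
  set S := ∑ i ∈ Finset.Icc 2 n, ((i:ℝ) - 1)^2 with hS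
  have hS0 : 0 ≤ S := Finset.sum_nonneg (fun i _ => sq_nonneg _)
  set A := (n:ℝ) * ((n:ℝ)-1) / 2 with hA
  have key : Real.exp (-(A / (k:ℝ))) - (n:ℝ)^3 / (k:ℝ)^2
      ≤ ∏ i ∈ Finset.Icc 2 n, ((k : ℝ) + 1 - (i : ℝ)) / (k : ℝ) := by
    have h1 : Real.exp (-(A / (k:ℝ) + S / (k:ℝ)^2))
        ≤ ∏ i ∈ Finset.Icc 2 n, ((k : ℝ) + 1 - (i : ℝ)) / (k : ℝ) := by
      have heq : ∑ i ∈ Finset.Icc 2 n, (-((((i:ℝ) - 1) / (k:ℝ)) + (((i:ℝ) - 1) / (k:ℝ))^2))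
          = -(A / (k:ℝ) + S / (k:ℝ)^2) := by
        rw [Finset.sum_neg_distrib, neg_inj, Finset.sum_add_distrib, ← Finset.sum_div, sum_Icc_id,
          ← hA]
        congr 1
        rw [hS, Finset.sum_div]
        exact Finset.sum_congr rfl (fun i _ => div_pow _ _ _)
      rw [← heq, Real.exp_sum]
      apply Finset.prod_le_prod
      · intro i _; exact (Real.exp_pos _).le
      · intro i hi
        simp only [Finset.mem_Icc] at hi
        rw [factor_eq hk0]
        apply exp_quarter
        · apply div_nonneg _ hk0.le
          have : (2:ℝ) ≤ (i:ℝ) := by exact_mod_cast hi.1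
          linarith
        · have hin : (i:ℝ) ≤ (n:ℝ) := by exact_mod_cast hi.2
          rw [div_le_iff₀ hk0]
          calc (i:ℝ) - 1 ≤ (n:ℝ) := by linarith
            _ = 1/4 * (4 * (n:ℝ)) := by ring
            _ ≤ 1/4 * (k:ℝ) := by linarith
    have h2 : Real.exp (-(A / (k:ℝ))) - (n:ℝ)^3 / (k:ℝ)^2
        ≤ Real.exp (-(A / (k:ℝ) + S / (k:ℝ)^2)) := by
      have hss : S / (k:ℝ)^2 ≤ (n:ℝ)^3 / (k:ℝ)^2 := by
        exact (div_le_div_iff_of_pos_right (by positivity)).mpr (sum_Icc_sq_le n)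
      have hs2 : (0:ℝ) ≤ S / (k:ℝ)^2 := by positivity
      have hee : Real.exp (-(A / (k:ℝ) + S / (k:ℝ)^2))
          = Real.exp (-(A/(k:ℝ))) * Real.exp (-(S/(k:ℝ)^2)) := by
        rw [← Real.exp_add]; congr 1; ring
      have h3 : 1 - S/(k:ℝ)^2 ≤ Real.exp (-(S/(k:ℝ)^2)) := by
        linarith [Real.add_one_le_exp (-(S/(k:ℝ)^2))]
      have hA0 : 0 ≤ A := by rw [hA]; nlinarith
      have h4 : Real.exp (-(A/(k:ℝ))) ≤ 1 := by
        rw [← Real.exp_zero]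
        apply Real.exp_le_exp.mpr
        have : 0 ≤ A/(k:ℝ) := by positivity
        linarith
      have h5 : Real.exp (-(A/(k:ℝ))) * (1 - S/(k:ℝ)^2)
          ≤ Real.exp (-(A/(k:ℝ))) * Real.exp (-(S/(k:ℝ)^2)) :=
        mul_le_mul_of_nonneg_left h3 (Real.exp_nonneg _)
      rw [hee]
      nlinarith [Real.exp_nonneg (-(A/(k:ℝ)))]
    linarith
  linarith

lemma summable_shift {p : ℝ} (hp : p < -1) :
    Summable (fun k : ℕ => ((k:ℝ)+1) ^ p) := by
  have h := Real.summable_nat_rpow.mpr hp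
  have h2 := (summable_nat_add_iff 1).mpr h
  apply h2.congr
  intro k
  push_cast
  rfl

lemma one_sub_exp_le {y : ℝ} : 1 - Real.exp (-y) ≤ y := by
  linarith [Real.add_one_le_exp (-y)]

lemma exp_neg_le_one {y : ℝ} (hy : 0 ≤ y) : Real.exp (-y) ≤ 1 := by
  rw [← Real.exp_zero]
  exact Real.exp_le_exp.mpr (by linarith)

/-- the `T` series term. -/
noncomputable def hh (β a x : ℝ) : ℝ := x ^ (-β) * (1 - Real.exp (-(a / x)))

lemma hh_nonneg {β a x : ℝ} (ha : 0 ≤ a) (hx : 0 < x) : 0 ≤ hh β a x := by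
  unfold hh
  apply mul_nonneg (Real.rpow_nonneg hx.le _)
  have : Real.exp (-(a/x)) ≤ 1 := exp_neg_le_one (by positivity)
  linarith

lemma hh_le {β a x : ℝ} (hβ : 0 < β) (ha : 0 ≤ a) (hx : 0 < x) :
    hh β a x ≤ a * x ^ (-β - 1) := by
  unfold hh
  have h1 : 1 - Real.exp (-(a/x)) ≤ a / x := one_sub_exp_le
  calc x ^ (-β) * (1 - Real.exp (-(a/x))) ≤ x ^ (-β) * (a / x) :=
        mul_le_mul_of_nonneg_left h1 (Real.rpow_nonneg hx.le _)
    _ = a * (x ^ (-β) * x⁻¹) := by ring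
    _ = a * x ^ (-β - 1) := by
        rw [show (-β - 1 : ℝ) = -β + -1 by ring, Real.rpow_add hx, Real.rpow_neg_one]

lemma summable_hh {β a : ℝ} (hβ : 0 < β) (ha : 0 ≤ a) :
    Summable (fun k : ℕ => hh β a ((k:ℝ)+1)) := by
  apply Summable.of_nonneg_of_le
    (fun k => hh_nonneg ha (by positivity))
    (fun k => hh_le hβ ha (by positivity))
  exact (summable_shift (by linarith)).mul_left a

lemma summable_main {β : ℝ} (hβ0 : 0 < β) (n : ℕ) (hn : 1 ≤ n) :
    Summable (fun k : ℕ => ((k:ℝ)+1) ^ (-β) * collisionProb (k+1) n) := by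
  set c : ℝ := (n:ℝ) * ((n:ℝ)-1) / 2 + (n:ℝ)^3 with hc
  have hbound : Summable (fun k : ℕ =>
      (if k + 1 < 4*n then (1:ℝ) else 0) + c * ((k:ℝ)+1) ^ (-β - 1)) := by
    apply Summable.add
    · apply summable_of_ne_finset_zero (s := Finset.range (4*n))
      intro k hk
      simp only [Finset.mem_range] at hk
      rw [if_neg (by omega)]
    · exact (summable_shift (by linarith)).mul_left c
  apply Summable.of_nonneg_of_le _ _ hbound
  · intro k
    exact mul_nonneg (Real.rpow_nonneg (by positivity) _) (collisionProb_nonneg _ _)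
  · intro k
    have hk1 : (0:ℝ) < (k:ℝ)+1 := by positivity
    by_cases hk : k + 1 < 4*n
    · rw [if_pos hk]
      have h1 : ((k:ℝ)+1) ^ (-β) ≤ 1 :=
        Real.rpow_le_one_of_one_le_of_nonpos (by linarith) (by linarith)
      have h2 : ((k:ℝ)+1) ^ (-β) * collisionProb (k+1) n ≤ 1 * 1 :=
        mul_le_mul h1 (collisionProb_le_one _ _) (collisionProb_nonneg _ _) zero_le_one
      have h3 : 0 ≤ c * ((k:ℝ)+1) ^ (-β - 1) := by
        apply mul_nonneg _ (Real.rpow_nonneg hk1.le _)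
        rw [hc]
        have h1n : (1:ℝ) ≤ (n:ℝ) := by exact_mod_cast hn
        nlinarith [pow_nonneg (by linarith : (0:ℝ) ≤ (n:ℝ)) 3,
          mul_nonneg (by linarith : (0:ℝ) ≤ (n:ℝ)) (by linarith : (0:ℝ) ≤ (n:ℝ)-1)]
      linarith
    · rw [if_neg hk]
      push_neg at hk
      have hcast : ((k+1:ℕ):ℝ) = (k:ℝ)+1 := by push_cast; rfl
      have hcp := collisionProb_le hn (by omega : 4*n ≤ k+1)
      rw [hcast] at hcp
      have hb1 : 1 - Real.exp (-((n:ℝ) * ((n:ℝ)-1) / 2 / ((k:ℝ)+1)))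
          ≤ ((n:ℝ) * ((n:ℝ)-1) / 2) / ((k:ℝ)+1) := one_sub_exp_le
      have hb2 : (n:ℝ)^3/((k:ℝ)+1)^2 ≤ (n:ℝ)^3/((k:ℝ)+1) := by
        apply div_le_div_of_nonneg_left (by positivity) hk1
        nlinarith
      have hcp2 : (1 - Real.exp (-((n:ℝ) * ((n:ℝ)-1) / 2 / ((k:ℝ)+1)))) + (n:ℝ)^3/((k:ℝ)+1)^2
          ≤ c / ((k:ℝ)+1) := by
        rw [hc, add_div]
        linarith
      calc ((k:ℝ)+1) ^ (-β) * collisionProb (k+1) n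
          ≤ ((k:ℝ)+1) ^ (-β) * (c / ((k:ℝ)+1)) := by
            apply mul_le_mul_of_nonneg_left _ (Real.rpow_nonneg hk1.le _)
            exact le_trans hcp hcp2
        _ = c * (((k:ℝ)+1) ^ (-β) * ((k:ℝ)+1)⁻¹) := by ring
        _ = c * ((k:ℝ)+1) ^ (-β - 1) := by
            rw [show (-β - 1 : ℝ) = -β + -1 by ring, Real.rpow_add hk1, Real.rpow_neg_one]
        _ ≤ 0 + c * ((k:ℝ)+1) ^ (-β - 1) := by linarith

lemma sum_range_rpow_le {β : ℝ} (hβ0 : 0 < β) (hβ1 : β < 1) (N : ℕ) :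
    ∑ k ∈ Finset.range N, ((k:ℝ)+1)^(-β) ≤ (N:ℝ)^(1-β)/(1-β) := by
  have h1β : (0:ℝ) < 1 - β := by linarith
  induction N with
  | zero => simp [Real.zero_rpow (by linarith : (1:ℝ)-β ≠ 0)]
  | succ m ih =>
    rw [Finset.sum_range_succ]
    have hm1 : (0:ℝ) < (m:ℝ)+1 := by positivity
    have key : ((m:ℝ)+1)^(-β) ≤ (((m:ℝ)+1)^(1-β) - (m:ℝ)^(1-β))/(1-β) := by
      have hs : (-1:ℝ) ≤ -1/((m:ℝ)+1) := by
        rw [neg_div]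
        apply neg_le_neg
        rw [div_le_one hm1]; linarith
      have hb : ((1:ℝ) + (-1/((m:ℝ)+1)))^(1-β) ≤ 1 + (1-β)*(-1/((m:ℝ)+1)) :=
        rpow_one_add_le_one_add_mul_self hs (by linarith) (by linarith)
      have he : (1:ℝ) + (-1/((m:ℝ)+1)) = (m:ℝ)/((m:ℝ)+1) := by field_simp; ring
      rw [he] at hb
      have hy : (0:ℝ) < ((m:ℝ)+1)^(1-β) := Real.rpow_pos_of_pos hm1 _
      have hmul := mul_le_mul_of_nonneg_right hb hy.le
      have hL : ((m:ℝ)/((m:ℝ)+1))^(1-β) * ((m:ℝ)+1)^(1-β) = (m:ℝ)^(1-β) := by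
        rw [← Real.mul_rpow (by positivity) hm1.le, div_mul_cancel₀]
        exact hm1.ne'
      have hR : (1 + (1-β)*(-1/((m:ℝ)+1))) * ((m:ℝ)+1)^(1-β)
          = ((m:ℝ)+1)^(1-β) - (1-β) * ((m:ℝ)+1)^(-β) := by
        have h2 : ((m:ℝ)+1)^(1-β) = ((m:ℝ)+1) * ((m:ℝ)+1)^(-β) := by
          rw [show (1-β:ℝ) = 1 + -β by ring, Real.rpow_add hm1, Real.rpow_one]
        rw [h2]; field_simp; ring
      rw [hL, hR] at hmul
      rw [le_div_iff₀ h1β]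
      linarith
    calc ∑ k ∈ Finset.range m, ((k:ℝ)+1)^(-β) + ((m:ℝ)+1)^(-β)
        ≤ (m:ℝ)^(1-β)/(1-β) + (((m:ℝ)+1)^(1-β) - (m:ℝ)^(1-β))/(1-β) :=
          add_le_add ih key
      _ = ((m:ℝ)+1)^(1-β)/(1-β) := by ring
      _ = ((m+1:ℕ):ℝ)^(1-β)/(1-β) := by push_cast; rfl

lemma tail_sq {M : ℕ} (hM : 2 ≤ M) :
    Summable (fun k : ℕ => if M ≤ k+1 then (((k:ℝ)+1)^2)⁻¹ else 0) ∧
    ∑' k : ℕ, (if M ≤ k+1 then (((k:ℝ)+1)^2)⁻¹ else 0) ≤ ((M:ℝ)-1)⁻¹ := by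
  set G : ℕ → ℝ := fun k => ((max k (M-1) : ℕ):ℝ)⁻¹ with hG
  have hGpos : ∀ k, 0 < ((max k (M-1) : ℕ):ℝ) := by
    intro k
    have : 1 ≤ max k (M-1) := le_trans (by omega) (le_max_right _ _)
    exact_mod_cast by omega
  have hGanti : ∀ k, G (k+1) ≤ G k := by
    intro k
    apply inv_anti₀ (hGpos k)
    exact_mod_cast Nat.cast_le.mpr (max_le_max (Nat.le_succ k) le_rfl)
  have hd0 : ∀ k, 0 ≤ G k - G (k+1) := fun k => by linarith [hGanti k]
  have hG0 : G 0 = ((M:ℝ)-1)⁻¹ := by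
    rw [hG]
    simp only [Nat.max_eq_right (Nat.zero_le _)]
    congr 1
    have : ((M-1:ℕ):ℝ) = (M:ℝ)-1 := by
      push_cast [Nat.cast_sub (by omega : 1 ≤ M)]
      ring
    rw [this]
  have hGlim : Tendsto G atTop (𝓝 0) := by
    have hinner : Tendsto (fun k : ℕ => max k (M-1)) atTop atTop :=
      tendsto_atTop_mono (fun k => le_max_left k (M-1)) tendsto_id
    exact tendsto_inv_atTop_nhds_zero_nat.comp hinner
  have hsum : HasSum (fun k => G k - G (k+1)) (((M:ℝ)-1)⁻¹) := by
    rw [hasSum_iff_tendsto_nat_of_nonneg hd0]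
    have hps : ∀ N : ℕ, ∑ k ∈ Finset.range N, (G k - G (k+1)) = G 0 - G N :=
      fun N => Finset.sum_range_sub' G N
    simp_rw [hps]
    rw [← hG0]
    simpa using (tendsto_const_nhds.sub hGlim)
  have hle : ∀ k : ℕ, (if M ≤ k+1 then (((k:ℝ)+1)^2)⁻¹ else 0) ≤ G k - G (k+1) := by
    intro k
    by_cases hk : M ≤ k+1
    · rw [if_pos hk]
      have h1 : max k (M-1) = k := max_eq_left (by omega)
      have h2 : max (k+1) (M-1) = k+1 := max_eq_left (by omega)
      rw [hG]
      simp only [h1, h2]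
      have hk0 : (0:ℝ) < (k:ℝ) := by exact_mod_cast by omega
      have hk1 : (0:ℝ) < (k:ℝ)+1 := by linarith
      have hcast : ((k+1:ℕ):ℝ) = (k:ℝ)+1 := by push_cast; rfl
      rw [hcast]
      rw [show (k:ℝ)⁻¹ - ((k:ℝ)+1)⁻¹ = ((k:ℝ)*((k:ℝ)+1))⁻¹ by
        field_simp; ring]
      apply inv_anti₀ (by positivity)
      nlinarith
    · rw [if_neg hk]
      exact hd0 k
  have hsummable : Summable (fun k : ℕ => if M ≤ k+1 then (((k:ℝ)+1)^2)⁻¹ else 0) := by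
    apply Summable.of_nonneg_of_le _ hle hsum.summable
    intro k
    by_cases hk : M ≤ k+1
    · rw [if_pos hk]; positivity
    · rw [if_neg hk]
  refine ⟨hsummable, ?_⟩
  rw [← hsum.tsum_eq]
  exact Summable.tsum_le_tsum hle hsummable hsum.summable

lemma continuousOn_hh (β a : ℝ) : ContinuousOn (hh β a) (Ioi (0:ℝ)) := by
  apply ContinuousOn.mul
  · exact fun x hx =>
      (Real.continuousAt_rpow_const x (-β) (Or.inl (ne_of_gt hx))).continuousWithinAt
  · apply ContinuousOn.sub continuousOn_const
    apply Real.continuous_exp.comp_continuousOn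
    apply ContinuousOn.neg
    exact continuousOn_const.div continuousOn_id (fun x hx => ne_of_gt hx)

lemma continuousOn_phi (β : ℝ) :
    ContinuousOn (fun t : ℝ => t^(β-2) * (1 - Real.exp (-t))) (Ioi (0:ℝ)) := by
  apply ContinuousOn.mul
  · exact fun x hx =>
      (Real.continuousAt_rpow_const x (β-2) (Or.inl (ne_of_gt hx))).continuousWithinAt
  · exact (continuous_const.sub (Real.continuous_exp.comp continuous_neg)).continuousOn

lemma integrableOn_rpow_Ioc {p : ℝ} (hp : -1 < p) :
    IntegrableOn (fun t : ℝ => t ^ p) (Ioc (0:ℝ) 1) :=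
  (intervalIntegrable_iff_integrableOn_Ioc_of_le zero_le_one).mp
    (intervalIntegral.intervalIntegrable_rpow' hp)

lemma integrableOn_phi {β : ℝ} (hβ0 : 0 < β) (hβ1 : β < 1) :
    IntegrableOn (fun t : ℝ => t^(β-2) * (1 - Real.exp (-t))) (Ioi (0:ℝ)) := by
  rw [← Ioc_union_Ioi_eq_Ioi (zero_le_one : (0:ℝ) ≤ 1)]
  apply IntegrableOn.union
  · apply Integrable.mono' (integrableOn_rpow_Ioc (by linarith : (-1:ℝ) < β - 1))
    · exact (((continuousOn_phi β).mono Ioc_subset_Ioi_self).aestronglyMeasurable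
        measurableSet_Ioc)
    · rw [ae_restrict_iff' measurableSet_Ioc]
      apply ae_of_all
      intro t ht
      obtain ⟨ht0, ht1⟩ := ht
      have h1 : 0 ≤ 1 - Real.exp (-t) := by
        have := exp_neg_le_one ht0.le
        linarith
      rw [norm_of_nonneg (mul_nonneg (Real.rpow_nonneg ht0.le _) h1)]
      calc t^(β-2) * (1 - Real.exp (-t)) ≤ t^(β-2) * t :=
            mul_le_mul_of_nonneg_left one_sub_exp_le (Real.rpow_nonneg ht0.le _)
        _ = t^(β-1) := by
            rw [show (β-1:ℝ) = (β-2) + 1 by ring, Real.rpow_add ht0, Real.rpow_one]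
  · apply Integrable.mono' (integrableOn_Ioi_rpow_of_lt (by linarith : β-2 < -1) zero_lt_one)
    · exact (((continuousOn_phi β).mono (Ioi_subset_Ioi zero_le_one)).aestronglyMeasurable
        measurableSet_Ioi)
    · rw [ae_restrict_iff' measurableSet_Ioi]
      apply ae_of_all
      intro t ht
      have ht0 : (0:ℝ) < t := lt_trans zero_lt_one ht
      have h1 : 0 ≤ 1 - Real.exp (-t) := by
        have := exp_neg_le_one ht0.le
        linarith
      have h2 : 1 - Real.exp (-t) ≤ 1 := by
        have := Real.exp_nonneg (-t)
        linarith
      rw [norm_of_nonneg (mul_nonneg (Real.rpow_nonneg ht0.le _) h1)]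
      calc t^(β-2) * (1 - Real.exp (-t)) ≤ t^(β-2) * 1 :=
            mul_le_mul_of_nonneg_left h2 (Real.rpow_nonneg ht0.le _)
        _ = t^(β-2) := mul_one _

lemma integrableOn_hh {β a : ℝ} (hβ0 : 0 < β) (hβ1 : β < 1) (ha : 0 < a) :
    IntegrableOn (hh β a) (Ioi (0:ℝ)) := by
  rw [← Ioc_union_Ioi_eq_Ioi (zero_le_one : (0:ℝ) ≤ 1)]
  apply IntegrableOn.union
  · apply Integrable.mono' (integrableOn_rpow_Ioc (by linarith : (-1:ℝ) < -β))
    · exact (((continuousOn_hh β a).mono Ioc_subset_Ioi_self).aestronglyMeasurable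
        measurableSet_Ioc)
    · rw [ae_restrict_iff' measurableSet_Ioc]
      apply ae_of_all
      intro x hx
      obtain ⟨hx0, hx1⟩ := hx
      rw [norm_of_nonneg (hh_nonneg ha.le hx0)]
      unfold hh
      have h2 : 1 - Real.exp (-(a/x)) ≤ 1 := by
        have := Real.exp_nonneg (-(a/x))
        linarith
      calc x^(-β) * (1 - Real.exp (-(a/x))) ≤ x^(-β) * 1 :=
            mul_le_mul_of_nonneg_left h2 (Real.rpow_nonneg hx0.le _)
        _ = x^(-β) := mul_one _
  · apply Integrable.mono'
      ((integrableOn_Ioi_rpow_of_lt (by linarith : -β-1 < -1) zero_lt_one).const_mul a)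
    · exact (((continuousOn_hh β a).mono (Ioi_subset_Ioi zero_le_one)).aestronglyMeasurable
        measurableSet_Ioi)
    · rw [ae_restrict_iff' measurableSet_Ioi]
      apply ae_of_all
      intro x hx
      have hx0 : (0:ℝ) < x := lt_trans zero_lt_one hx
      rw [norm_of_nonneg (hh_nonneg ha.le hx0)]
      exact hh_le hβ0 ha.le hx0

lemma integral_phi {β : ℝ} (hβ0 : 0 < β) (hβ1 : β < 1) :
    ∫ t in Ioi (0:ℝ), t^(β-2) * (1 - Real.exp (-t)) = Real.Gamma β / (1-β) := by
  have hb1 : β - 1 ≠ 0 := by linarith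
  set u : ℝ → ℝ := fun t => t^(β-1) * (1 - Real.exp (-t)) / (β-1) with hu
  set u' : ℝ → ℝ := fun t => t^(β-2) * (1 - Real.exp (-t)) + Real.exp (-t) * t^(β-1) / (β-1)
    with hu'
  have hpsi : IntegrableOn (fun t : ℝ => Real.exp (-t) * t^(β-1) / (β-1)) (Ioi (0:ℝ)) :=
    (Real.GammaIntegral_convergent hβ0).div_const _
  have hint : IntegrableOn u' (Ioi (0:ℝ)) := (integrableOn_phi hβ0 hβ1).add hpsi
  have hderiv : ∀ x ∈ Ioi (0:ℝ), HasDerivAt u (u' x) x := by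
    intro x hx
    have hx0 : x ≠ 0 := ne_of_gt hx
    have h1 : HasDerivAt (fun t : ℝ => t^(β-1)) ((β-1) * x^(β-1-1)) x :=
      Real.hasDerivAt_rpow_const (Or.inl hx0)
    have h2 : HasDerivAt (fun t : ℝ => 1 - Real.exp (-t)) (Real.exp (-x)) x := by
      have ha : HasDerivAt (fun t : ℝ => -t) (-1) x := (hasDerivAt_id x).neg
      have hb : HasDerivAt (fun t : ℝ => Real.exp (-t)) (Real.exp (-x) * (-1)) x :=
        (Real.hasDerivAt_exp (-x)).comp x ha
      have hc := (hasDerivAt_const x (1:ℝ)).sub hb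
      simpa using hb.const_sub (1:ℝ)
    have h3 := (h1.mul h2).div_const (β-1)
    refine h3.congr_deriv ?_
    rw [hu']
    rw [show (β-1-1:ℝ) = β-2 by ring]
    field_simp
  have hlim : Tendsto u atTop (𝓝 0) := by
    have h1 : Tendsto (fun t : ℝ => t^(β-1)) atTop (𝓝 0) := by
      have := tendsto_rpow_neg_atTop (by linarith : (0:ℝ) < 1 - β)
      convert this using 2 with x
      ring_nf
    have h2 : Tendsto (fun t : ℝ => 1 - Real.exp (-t)) atTop (𝓝 1) := by
      have := Real.tendsto_exp_neg_atTop_nhds_zero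
      have h := tendsto_const_nhds.sub this (α := ℝ) (f := fun _ : ℝ => (1:ℝ))
      simpa using h
    have h3 := (h1.mul h2).div_const (β-1)
    simpa using h3
  have hcont : ContinuousWithinAt u (Ici (0:ℝ)) 0 := by
    unfold ContinuousWithinAt
    have hu0 : u 0 = 0 := by
      rw [hu]
      simp
    rw [hu0]
    have hbd : ∀ᶠ t in 𝓝[Ici (0:ℝ)] 0, ‖u t‖ ≤ t^β / (1-β) := by
      filter_upwards [self_mem_nhdsWithin] with t ht
      have ht0 : (0:ℝ) ≤ t := ht
      have h1 : 0 ≤ 1 - Real.exp (-t) := by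
        have := exp_neg_le_one ht0
        linarith
      have hnum : 0 ≤ t^(β-1) * (1 - Real.exp (-t)) :=
        mul_nonneg (Real.rpow_nonneg ht0 _) h1
      have h2 : t^(β-1) * (1 - Real.exp (-t)) ≤ t^β := by
        rcases eq_or_lt_of_le ht0 with h | h
        · rw [← h]
          simp [Real.zero_rpow hb1, Real.zero_rpow (ne_of_gt hβ0)]
        · calc t^(β-1) * (1 - Real.exp (-t)) ≤ t^(β-1) * t :=
              mul_le_mul_of_nonneg_left one_sub_exp_le (Real.rpow_nonneg ht0 _)
          _ = t^β := by
              have h5 := Real.rpow_add h (β-1) 1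
              rw [Real.rpow_one] at h5
              rw [show (β-1+1:ℝ) = β by ring] at h5
              exact h5.symm
      have hun : ‖u t‖ = t^(β-1) * (1 - Real.exp (-t)) / (1-β) := by
        rw [hu]
        simp only []
        rw [Real.norm_eq_abs, abs_div, abs_of_nonneg hnum, abs_of_neg (by linarith : β-1 < 0),
          neg_sub]
      rw [hun]
      exact (div_le_div_iff_of_pos_right (by linarith : (0:ℝ) < 1-β)).mpr h2
    have hg : Tendsto (fun t : ℝ => t^β/(1-β)) (𝓝[Ici (0:ℝ)] 0) (𝓝 0) := by
      have hc : ContinuousAt (fun t : ℝ => t^β) 0 :=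
        Real.continuousAt_rpow_const 0 β (Or.inr hβ0.le)
      have h := (hc.tendsto).mono_left (nhdsWithin_le_nhds (s := Ici (0:ℝ)))
      rw [Real.zero_rpow (ne_of_gt hβ0)] at h
      simpa using h.div_const (1-β)
    exact squeeze_zero_norm' hbd hg
  have hFTC := integral_Ioi_of_hasDerivAt_of_tendsto hcont hderiv hint hlim
  have hu0 : u 0 = 0 := by rw [hu]; simp
  rw [hu0, sub_zero] at hFTC
  have hsplit : ∫ x in Ioi (0:ℝ), u' x
      = (∫ x in Ioi (0:ℝ), x^(β-2) * (1 - Real.exp (-x)))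
        + ∫ x in Ioi (0:ℝ), Real.exp (-x) * x^(β-1) / (β-1) :=
    MeasureTheory.integral_add (integrableOn_phi hβ0 hβ1) hpsi
  have hgamma : ∫ x in Ioi (0:ℝ), Real.exp (-x) * x^(β-1) / (β-1)
      = Real.Gamma β / (β-1) := by
    rw [MeasureTheory.integral_div, ← Real.Gamma_eq_integral hβ0]
  rw [hsplit, hgamma] at hFTC
  have heq : -(Real.Gamma β/(β-1)) = Real.Gamma β/(1-β) := by
    rw [← neg_div, div_eq_div_iff (by linarith) (by linarith)]
    ring
  linarith

lemma integral_hh {β a : ℝ} (hβ0 : 0 < β) (hβ1 : β < 1) (ha : 0 < a) :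
    ∫ x in Ioi (0:ℝ), hh β a x = a^(1-β) * (Real.Gamma β / (1-β)) := by
  have h1 : ∫ x in Ioi (0:ℝ), hh β a x
      = ∫ y in Ioi (0:ℝ), y^(β-2) * (1 - Real.exp (-(a*y))) := by
    rw [← integral_comp_rpow_Ioi (fun y => y^(β-2) * (1 - Real.exp (-(a*y))))
      (p := -1) (by norm_num)]
    apply setIntegral_congr_fun measurableSet_Ioi
    intro x hx
    have hx0 : (0:ℝ) < x := hx
    simp only [smul_eq_mul]
    have hF : |(-1:ℝ)| * x ^ ((-1:ℝ)-1) = x^(-2:ℝ) := by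
      norm_num
    rw [hF, Real.rpow_neg_one x]
    have hE : (x⁻¹)^(β-2) = x^(2-β) := by
      rw [← Real.rpow_neg_one x, ← Real.rpow_mul hx0.le]
      congr 1
      ring
    rw [hE, ← div_eq_mul_inv a x]
    unfold hh
    rw [← mul_assoc]
    congr 1
    rw [← Real.rpow_add hx0]
    congr 1
    ring
  rw [h1]
  set J : ℝ := ∫ t in Ioi (0:ℝ), t^(β-2) * (1 - Real.exp (-t)) with hJ
  set X : ℝ := ∫ y in Ioi (0:ℝ), y^(β-2) * (1 - Real.exp (-(a*y))) with hX
  have hs := integral_comp_mul_left_Ioi (fun t => t^(β-2) * (1 - Real.exp (-t))) 0 ha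
  rw [mul_zero] at hs
  have congr1 : ∫ x in Ioi (0:ℝ), (fun t => t^(β-2) * (1 - Real.exp (-t))) (a*x)
      = ∫ x in Ioi (0:ℝ), a^(β-2) * (x^(β-2) * (1 - Real.exp (-(a*x)))) := by
    apply setIntegral_congr_fun measurableSet_Ioi
    intro x hx
    simp only []
    rw [Real.mul_rpow ha.le (le_of_lt hx)]
    ring
  rw [congr1, MeasureTheory.integral_const_mul, smul_eq_mul] at hs
  -- hs : a^(β-2) * X = a⁻¹ * J
  have key : X = a^(2-β) * (a^(β-2) * X) := by
    rw [← mul_assoc, ← Real.rpow_add ha]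
    norm_num
  calc X = a^(2-β) * (a^(β-2) * X) := key
    _ = a^(2-β) * (a⁻¹ * J) := by rw [hs]
    _ = (a^(2-β) * a^(-1:ℝ)) * J := by rw [Real.rpow_neg_one]; ring
    _ = a^(1-β) * J := by
        rw [← Real.rpow_add ha, show (2-β + -1 : ℝ) = 1-β by ring]
    _ = a^(1-β) * (Real.Gamma β / (1-β)) := by rw [hJ, integral_phi hβ0 hβ1]

lemma hh_antitoneOn {β a : ℝ} (hβ0 : 0 < β) (ha : 0 ≤ a) :
    AntitoneOn (hh β a) (Ioi (0:ℝ)) := by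
  intro x hx y hy hxy
  unfold hh
  have hx0 : (0:ℝ) < x := hx
  have hy0 : (0:ℝ) < y := hy
  apply mul_le_mul
  · exact Real.rpow_le_rpow_of_nonpos hx0 hxy (by linarith)
  · have hdiv : a / y ≤ a / x := div_le_div_of_nonneg_left ha hx0 hxy
    have := Real.exp_le_exp.mpr (neg_le_neg hdiv)
    linarith
  · have := exp_neg_le_one (by positivity : 0 ≤ a / y)
    linarith
  · exact Real.rpow_nonneg hx0.le _

lemma intervalIntegrable_hh {β a : ℝ} (hβ0 : 0 < β) (hβ1 : β < 1) (ha : 0 < a)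
    {c d : ℝ} (hc : 0 < c) (hcd : c ≤ d) : IntervalIntegrable (hh β a) volume c d := by
  rw [intervalIntegrable_iff_integrableOn_Ioc_of_le hcd]
  exact (integrableOn_hh hβ0 hβ1 ha).mono_set (fun x hx => lt_trans hc hx.1)

lemma integral_piece_le {β a : ℝ} (hβ0 : 0 < β) (hβ1 : β < 1) (ha : 0 < a)
    {c : ℝ} (hc : (1:ℝ) ≤ c) :
    ∫ x in c..(c+1), hh β a x ≤ hh β a c := by
  have hc0 : (0:ℝ) < c := by linarith
  have h := intervalIntegral.integral_mono_on (by linarith : c ≤ c+1)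
    (intervalIntegrable_hh hβ0 hβ1 ha hc0 (by linarith))
    (intervalIntegrable_const (c := hh β a c))
    (fun x hx => hh_antitoneOn hβ0 ha.le (mem_Ioi.mpr hc0)
      (mem_Ioi.mpr (lt_of_lt_of_le hc0 hx.1)) hx.1)
  simpa using h

lemma le_integral_piece {β a : ℝ} (hβ0 : 0 < β) (hβ1 : β < 1) (ha : 0 < a)
    {c : ℝ} (hc : (1:ℝ) ≤ c) :
    hh β a (c+1) ≤ ∫ x in c..(c+1), hh β a x := by
  have hc0 : (0:ℝ) < c := by linarith
  have h := intervalIntegral.integral_mono_on (by linarith : c ≤ c+1)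
    (intervalIntegrable_const (c := hh β a (c+1)))
    (intervalIntegrable_hh hβ0 hβ1 ha hc0 (by linarith))
    (fun x hx => hh_antitoneOn hβ0 ha.le
      (mem_Ioi.mpr (lt_of_lt_of_le hc0 hx.1)) (mem_Ioi.mpr (by linarith)) hx.2)
  simpa using h

lemma P1 {β a : ℝ} (hβ0 : 0 < β) (hβ1 : β < 1) (ha : 0 < a) (N : ℕ) :
    ∫ x in (1:ℝ)..((N:ℝ)+1), hh β a x ≤ ∑ k ∈ Finset.range N, hh β a ((k:ℝ)+1) := by
  induction N with
  | zero => simp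
  | succ m ih =>
    have hcast : ((m+1:ℕ):ℝ) + 1 = ((m:ℝ)+1) + 1 := by push_cast; ring
    rw [hcast]
    have hm0 : (0:ℝ) ≤ (m:ℝ) := Nat.cast_nonneg m
    have hm1 : (1:ℝ) ≤ (m:ℝ)+1 := by linarith
    have hsplit := intervalIntegral.integral_add_adjacent_intervals
      (intervalIntegrable_hh hβ0 hβ1 ha zero_lt_one hm1)
      (intervalIntegrable_hh hβ0 hβ1 ha (by linarith : (0:ℝ) < (m:ℝ)+1)
        (by linarith : (m:ℝ)+1 ≤ (m:ℝ)+1+1))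
    rw [Finset.sum_range_succ, ← hsplit]
    have hp := integral_piece_le hβ0 hβ1 ha hm1
    linarith [ih]

lemma P2' {β a : ℝ} (hβ0 : 0 < β) (hβ1 : β < 1) (ha : 0 < a) (N : ℕ) :
    ∑ k ∈ Finset.range N, hh β a (((k:ℝ)+1)+1) ≤ ∫ x in (1:ℝ)..((N:ℝ)+1), hh β a x := by
  induction N with
  | zero => simp
  | succ m ih =>
    have hcast : ((m+1:ℕ):ℝ) + 1 = ((m:ℝ)+1) + 1 := by push_cast; ring
    rw [hcast, Finset.sum_range_succ]
    have hm0 : (0:ℝ) ≤ (m:ℝ) := Nat.cast_nonneg m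
    have hm1 : (1:ℝ) ≤ (m:ℝ)+1 := by linarith
    have hsplit := intervalIntegral.integral_add_adjacent_intervals
      (intervalIntegrable_hh hβ0 hβ1 ha zero_lt_one hm1)
      (intervalIntegrable_hh hβ0 hβ1 ha (by linarith : (0:ℝ) < (m:ℝ)+1)
        (by linarith : (m:ℝ)+1 ≤ (m:ℝ)+1+1))
    rw [← hsplit]
    have hp := le_integral_piece hβ0 hβ1 ha hm1
    linarith [ih]

lemma T_bounds {β a : ℝ} (hβ0 : 0 < β) (hβ1 : β < 1) (ha : 0 < a) :
    a^(1-β) * (Real.Gamma β / (1-β)) - 1/(1-β) ≤ (∑' k : ℕ, hh β a ((k:ℝ)+1)) ∧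
    (∑' k : ℕ, hh β a ((k:ℝ)+1)) ≤ 1 + a^(1-β) * (Real.Gamma β / (1-β)) := by
  have h1β : (0:ℝ) < 1-β := by linarith
  have hIoi0 := integrableOn_hh hβ0 hβ1 ha
  have hIoi1 : IntegrableOn (hh β a) (Ioi (1:ℝ)) := hIoi0.mono_set (Ioi_subset_Ioi zero_le_one)
  have hIoc : IntegrableOn (hh β a) (Ioc (0:ℝ) 1) := hIoi0.mono_set Ioc_subset_Ioi_self
  have hsplit : ∫ x in Ioi (0:ℝ), hh β a x
      = (∫ x in Ioc (0:ℝ) 1, hh β a x) + ∫ x in Ioi (1:ℝ), hh β a x := by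
    rw [← MeasureTheory.setIntegral_union (Ioc_disjoint_Ioi le_rfl) measurableSet_Ioi hIoc hIoi1,
      Ioc_union_Ioi_eq_Ioi zero_le_one]
  have hIoc_nonneg : 0 ≤ ∫ x in Ioc (0:ℝ) 1, hh β a x :=
    setIntegral_nonneg measurableSet_Ioc (fun x hx => hh_nonneg ha.le hx.1)
  have hIoc_le : ∫ x in Ioc (0:ℝ) 1, hh β a x ≤ 1/(1-β) := by
    have hmono : ∫ x in Ioc (0:ℝ) 1, hh β a x ≤ ∫ x in Ioc (0:ℝ) 1, x^(-β) := by
      apply setIntegral_mono_on hIoc (integrableOn_rpow_Ioc (by linarith)) measurableSet_Ioc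
      intro x hx
      unfold hh
      have h2 : 1 - Real.exp (-(a/x)) ≤ 1 := by
        have := Real.exp_nonneg (-(a/x)); linarith
      calc x^(-β) * (1 - Real.exp (-(a/x))) ≤ x^(-β) * 1 :=
            mul_le_mul_of_nonneg_left h2 (Real.rpow_nonneg hx.1.le _)
        _ = x^(-β) := mul_one _
    have hval : ∫ x in Ioc (0:ℝ) 1, x^(-β) = 1/(1-β) := by
      rw [← intervalIntegral.integral_of_le zero_le_one,
        integral_rpow (Or.inl (by linarith : (-1:ℝ) < -β))]
      rw [Real.one_rpow, Real.zero_rpow (by linarith : -β+1 ≠ 0),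
        show (-β+1:ℝ) = 1-β by ring]
      norm_num
    linarith
  have hIint := integral_hh hβ0 hβ1 ha
  have hsummable : Summable (fun k : ℕ => hh β a ((k:ℝ)+1)) := summable_hh hβ0 ha.le
  have htend : Tendsto (fun N : ℕ => ((N:ℝ)+1)) atTop atTop :=
    tendsto_atTop_add_const_right atTop 1 tendsto_natCast_atTop_atTop
  constructor
  · have hlow : ∫ x in Ioi (1:ℝ), hh β a x ≤ ∑' k : ℕ, hh β a ((k:ℝ)+1) := by
      apply le_of_tendsto (intervalIntegral_tendsto_integral_Ioi 1 hIoi1 htend)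
      apply Filter.Eventually.of_forall
      intro N
      exact le_trans (P1 hβ0 hβ1 ha N)
        (Summable.sum_le_tsum (Finset.range N) (fun i _ => hh_nonneg ha.le (by positivity)) hsummable)
    linarith
  · have hup : ∀ N : ℕ, ∑ k ∈ Finset.range N, hh β a ((k:ℝ)+1)
        ≤ 1 + ∫ x in Ioi (1:ℝ), hh β a x := by
      intro N
      have hIoi1_nonneg : 0 ≤ ∫ x in Ioi (1:ℝ), hh β a x :=
        setIntegral_nonneg measurableSet_Ioi
          (fun x hx => hh_nonneg ha.le (lt_trans zero_lt_one hx))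
      cases N with
      | zero => simp; linarith
      | succ m =>
        rw [Finset.sum_range_succ']
        have hm0 : (0:ℝ) ≤ (m:ℝ) := Nat.cast_nonneg m
        have hm1 : (1:ℝ) ≤ (m:ℝ)+1 := by linarith
        have hsum_eq : ∑ k ∈ Finset.range m, hh β a (((k+1:ℕ):ℝ)+1)
            = ∑ k ∈ Finset.range m, hh β a (((k:ℝ)+1)+1) := by
          apply Finset.sum_congr rfl
          intro k _
          congr 1
          push_cast
          ring
        rw [hsum_eq]
        have h2' := P2' hβ0 hβ1 ha m
        have hic : ∫ x in (1:ℝ)..((m:ℝ)+1), hh β a x ≤ ∫ x in Ioi (1:ℝ), hh β a x := by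
          rcases eq_or_lt_of_le hm1 with h | h
          · rw [← h]
            simp [hIoi1_nonneg]
          · rw [intervalIntegral.integral_of_le hm1]
            apply setIntegral_mono_set hIoi1
            · rw [EventuallyLE, ae_restrict_iff' measurableSet_Ioi]
              apply Filter.Eventually.of_forall
              intro x hx
              exact hh_nonneg ha.le (lt_trans zero_lt_one hx)
            · exact HasSubset.Subset.eventuallyLE Ioc_subset_Ioi_self
        have hh1 : hh β a (((0:ℕ):ℝ)+1) ≤ 1 := by
          have h0 : ((0:ℕ):ℝ)+1 = 1 := by norm_num
          rw [h0]
          unfold hh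
          rw [Real.one_rpow, one_mul]
          have := Real.exp_nonneg (-(a/1)); linarith
        linarith
    have htsum : ∑' k : ℕ, hh β a ((k:ℝ)+1) ≤ 1 + ∫ x in Ioi (1:ℝ), hh β a x := by
      apply le_of_tendsto hsummable.hasSum.tendsto_sum_nat
      exact Filter.Eventually.of_forall hup
    linarith

lemma lambda_lower {β : ℝ} (hβ0 : 0 < β) (hβ1 : β < 1) {n : ℕ} (hn : 2 ≤ n) :
    (∑' k : ℕ, hh β ((n:ℝ)*((n:ℝ)-1)/2) ((k:ℝ)+1))
      ≤ ∑' k : ℕ, ((k:ℝ)+1) ^ (-β) * collisionProb (k+1) n := by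
  have hn1 : (1:ℝ) ≤ (n:ℝ) := by exact_mod_cast (by omega : 1 ≤ n)
  have ha : (0:ℝ) ≤ (n:ℝ)*((n:ℝ)-1)/2 := by nlinarith
  apply Summable.tsum_le_tsum _ (summable_hh hβ0 ha) (summable_main hβ0 n (by omega))
  intro k
  have h := collisionProb_ge n (k+1)
  have hc : ((k+1:ℕ):ℝ) = (k:ℝ)+1 := by push_cast; ring
  rw [hc] at h
  unfold hh
  exact mul_le_mul_of_nonneg_left h (Real.rpow_nonneg (by positivity) _)

lemma lambda_upper {β : ℝ} (hβ0 : 0 < β) (hβ1 : β < 1) {n : ℕ} (hn : 16 ≤ n) :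
    ∑' k : ℕ, ((k:ℝ)+1) ^ (-β) * collisionProb (k+1) n
      ≤ (∑' k : ℕ, hh β ((n:ℝ)*((n:ℝ)-1)/2) ((k:ℝ)+1))
        + ((n*Nat.sqrt n : ℕ):ℝ)^(1-β)/(1-β)
        + 2*(n:ℝ)^3 * ((n*Nat.sqrt n : ℕ):ℝ)^(-β-1) := by
  have h1β : (0:ℝ) < 1-β := by linarith
  set M : ℕ := n * Nat.sqrt n with hMdef
  have hs4 : 4 ≤ Nat.sqrt n := Nat.le_sqrt.mpr (by omega)
  have hM4 : 4*n ≤ M := by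
    rw [hMdef, mul_comm n _]
    exact Nat.mul_le_mul_right n hs4
  have hM2 : 2 ≤ M := le_trans (by omega) hM4
  have hMR : (2:ℝ) ≤ (M:ℝ) := by exact_mod_cast hM2
  have hMR0 : (0:ℝ) < (M:ℝ) := by linarith
  have hn1 : (1:ℝ) ≤ (n:ℝ) := by exact_mod_cast (by omega : 1 ≤ n)
  set a : ℝ := (n:ℝ)*((n:ℝ)-1)/2 with hadef
  have ha : (0:ℝ) ≤ a := by rw [hadef]; nlinarith
  set c : ℝ := (M:ℝ)^(-β) * (n:ℝ)^3 with hcdef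
  have hc0 : 0 ≤ c := by
    apply mul_nonneg (Real.rpow_nonneg hMR0.le _) (by positivity)
  set f1 : ℕ → ℝ := fun k => if k+1 < M then ((k:ℝ)+1)^(-β) else 0 with hf1
  set f3 : ℕ → ℝ := fun k => if M ≤ k+1 then (((k:ℝ)+1)^2)⁻¹ else 0 with hf3
  have sf1 : Summable f1 := by
    apply summable_of_ne_finset_zero (s := Finset.range M)
    intro k hk
    simp only [Finset.mem_range] at hk
    rw [hf1]
    simp only []
    rw [if_neg (by omega)]
  have shh : Summable (fun k : ℕ => hh β a ((k:ℝ)+1)) := summable_hh hβ0 ha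
  have sf3 : Summable f3 := (tail_sq hM2).1
  have hterm : ∀ k : ℕ, ((k:ℝ)+1) ^ (-β) * collisionProb (k+1) n
      ≤ f1 k + hh β a ((k:ℝ)+1) + c * f3 k := by
    intro k
    have hk1 : (0:ℝ) < (k:ℝ)+1 := by positivity
    have hhnn : 0 ≤ hh β a ((k:ℝ)+1) := hh_nonneg ha hk1
    by_cases hk : k+1 < M
    · rw [hf1, hf3]
      simp only []
      rw [if_pos hk, if_neg (by omega)]
      have h1 : ((k:ℝ)+1) ^ (-β) * collisionProb (k+1) n ≤ ((k:ℝ)+1)^(-β) * 1 :=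
        mul_le_mul_of_nonneg_left (collisionProb_le_one _ _) (Real.rpow_nonneg hk1.le _)
      rw [mul_one] at h1
      rw [mul_zero]
      linarith
    · push_neg at hk
      rw [hf1, hf3]
      simp only []
      rw [if_neg (by omega), if_pos hk]
      have hcp := collisionProb_le (by omega : 1 ≤ n) (by omega : 4*n ≤ k+1)
      have hcast : ((k+1:ℕ):ℝ) = (k:ℝ)+1 := by push_cast; ring
      rw [hcast] at hcp
      have hmul := mul_le_mul_of_nonneg_left hcp (Real.rpow_nonneg hk1.le (-β))
      have hMk : ((M:ℕ):ℝ) ≤ (k:ℝ)+1 := by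
        rw [← hcast]; exact_mod_cast hk
      have hr : ((k:ℝ)+1)^(-β) ≤ (M:ℝ)^(-β) :=
        Real.rpow_le_rpow_of_nonpos hMR0 hMk (by linarith)
      have h2 : ((k:ℝ)+1)^(-β) * ((n:ℝ)^3/((k:ℝ)+1)^2) ≤ c * (((k:ℝ)+1)^2)⁻¹ := by
        rw [hcdef]
        rw [div_eq_mul_inv]
        have : ((k:ℝ)+1)^(-β) * ((n:ℝ)^3 * (((k:ℝ)+1)^2)⁻¹)
            = (((k:ℝ)+1)^(-β)) * (n:ℝ)^3 * (((k:ℝ)+1)^2)⁻¹ := by ring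
        rw [this]
        apply mul_le_mul_of_nonneg_right _ (by positivity)
        exact mul_le_mul_of_nonneg_right hr (by positivity)
      unfold hh
      rw [mul_add] at hmul
      linarith
  have hsum_le := Summable.tsum_le_tsum hterm (summable_main hβ0 n (by omega))
    (((sf1.add shh).add (sf3.mul_left c)).congr (fun k => by ring))
  have hsplit : ∑' k : ℕ, (f1 k + hh β a ((k:ℝ)+1) + c * f3 k)
      = (∑' k : ℕ, f1 k) + (∑' k : ℕ, hh β a ((k:ℝ)+1)) + c * ∑' k : ℕ, f3 k := by
    rw [Summable.tsum_add (sf1.add shh) (sf3.mul_left c), Summable.tsum_add sf1 shh, tsum_mul_left]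
  have hbound1 : ∑' k : ℕ, f1 k ≤ (M:ℝ)^(1-β)/(1-β) := by
    rw [tsum_eq_sum (s := Finset.range M) (by
      intro k hk
      simp only [Finset.mem_range] at hk
      rw [hf1]
      simp only []
      rw [if_neg (by omega)])]
    calc ∑ k ∈ Finset.range M, f1 k ≤ ∑ k ∈ Finset.range M, ((k:ℝ)+1)^(-β) := by
          apply Finset.sum_le_sum
          intro k _
          rw [hf1]
          simp only []
          split_ifs
          · exact le_rfl
          · exact Real.rpow_nonneg (by positivity) _
      _ ≤ (M:ℝ)^(1-β)/(1-β) := sum_range_rpow_le hβ0 hβ1 M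
  have hbound3 : c * ∑' k : ℕ, f3 k ≤ 2*(n:ℝ)^3 * (M:ℝ)^(-β-1) := by
    have ht := (tail_sq hM2).2
    have h1 : c * ∑' k : ℕ, f3 k ≤ c * ((M:ℝ)-1)⁻¹ :=
      mul_le_mul_of_nonneg_left ht hc0
    have h2 : ((M:ℝ)-1)⁻¹ ≤ 2/(M:ℝ) := by
      rw [inv_eq_one_div, div_le_div_iff₀ (by linarith) hMR0]
      linarith
    have h3 : c * ((M:ℝ)-1)⁻¹ ≤ c * (2/(M:ℝ)) := mul_le_mul_of_nonneg_left h2 hc0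
    have h4 : c * (2/(M:ℝ)) = 2*(n:ℝ)^3 * ((M:ℝ)^(-β) * ((M:ℝ))⁻¹) := by
      rw [hcdef]; ring
    have h5 : (M:ℝ)^(-β) * ((M:ℝ))⁻¹ = (M:ℝ)^(-β-1) := by
      rw [show (-β-1:ℝ) = -β + -1 by ring, Real.rpow_add hMR0, Real.rpow_neg_one]
    rw [h4, h5] at h3
    linarith
  calc ∑' k : ℕ, ((k:ℝ)+1) ^ (-β) * collisionProb (k+1) n
      ≤ ∑' k : ℕ, (f1 k + hh β a ((k:ℝ)+1) + c * f3 k) := hsum_le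
    _ = (∑' k : ℕ, f1 k) + (∑' k : ℕ, hh β a ((k:ℝ)+1)) + c * ∑' k : ℕ, f3 k := hsplit
    _ ≤ (∑' k : ℕ, hh β a ((k:ℝ)+1)) + (M:ℝ)^(1-β)/(1-β) + 2*(n:ℝ)^3 * (M:ℝ)^(-β-1) := by
        linarith

lemma final_ineq {β : ℝ} (hβ0 : 0 < β) (hβ1 : β < 1) {n : ℕ} (hn : 16 ≤ n) :
    ((n:ℝ)^(2*(β-1)) * ((n:ℝ)*((n:ℝ)-1)/2)^(1-β) * (Real.Gamma β/(1-β))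
        - (10/(1-β)) * (n:ℝ)^((β-1)/2)
      ≤ (n:ℝ)^(2*(β-1)) * ∑' k : ℕ, ((k:ℝ)+1)^(-β) * collisionProb (k+1) n) ∧
    ((n:ℝ)^(2*(β-1)) * ∑' k : ℕ, ((k:ℝ)+1)^(-β) * collisionProb (k+1) n
      ≤ (n:ℝ)^(2*(β-1)) * ((n:ℝ)*((n:ℝ)-1)/2)^(1-β) * (Real.Gamma β/(1-β))
        + (10/(1-β)) * (n:ℝ)^((β-1)/2)) := by
  have h1β : (0:ℝ) < 1-β := by linarith
  have hn1 : (1:ℝ) ≤ (n:ℝ) := by exact_mod_cast (by omega : 1 ≤ n)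
  have hn16 : (16:ℝ) ≤ (n:ℝ) := by exact_mod_cast hn
  have hnpos : (0:ℝ) < (n:ℝ) := by linarith
  have hn0 : (0:ℝ) ≤ (n:ℝ) := hnpos.le
  have hA0 : (0:ℝ) < (n:ℝ)*((n:ℝ)-1)/2 := by nlinarith
  have hrp : (0:ℝ) < (n:ℝ)^(2*(β-1)) := Real.rpow_pos_of_pos hnpos _
  have hEpos : (0:ℝ) < (n:ℝ)^((β-1)/2) := Real.rpow_pos_of_pos hnpos _
  have herr1 : (n:ℝ)^(2*(β-1)) ≤ (n:ℝ)^((β-1)/2) :=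
    Real.rpow_le_rpow_of_exponent_le hn1 (by linarith)
  -- M facts
  have hs4 : 4 ≤ Nat.sqrt n := Nat.le_sqrt.mpr (by omega)
  have hsq : ((Nat.sqrt n : ℕ):ℝ) ≤ Real.sqrt (n:ℝ) := by
    rw [Real.le_sqrt (Nat.cast_nonneg _) hn0]
    have h : Nat.sqrt n ^ 2 ≤ n := Nat.sqrt_le' n
    have h2 : ((Nat.sqrt n : ℕ):ℝ) ^ 2 ≤ (n:ℝ) := by exact_mod_cast h
    nlinarith
  have hsqrt_eq : Real.sqrt (n:ℝ) = (n:ℝ)^((1:ℝ)/2) := Real.sqrt_eq_rpow _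
  have hMcast : ((n * Nat.sqrt n : ℕ):ℝ) = (n:ℝ) * ((Nat.sqrt n : ℕ):ℝ) := by push_cast; ring
  have h32 : (n:ℝ) * (n:ℝ)^((1:ℝ)/2) = (n:ℝ)^((3:ℝ)/2) := by
    have h := Real.rpow_add hnpos 1 ((1:ℝ)/2)
    rw [Real.rpow_one] at h
    rw [← h]
    norm_num
  have hMle : ((n * Nat.sqrt n : ℕ):ℝ) ≤ (n:ℝ)^((3:ℝ)/2) := by
    rw [hMcast, ← h32]
    apply mul_le_mul_of_nonneg_left _ hn0
    rw [← hsqrt_eq]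
    exact hsq
  have hsq2 : Real.sqrt (n:ℝ) ≤ 2*((Nat.sqrt n:ℕ):ℝ) := by
    have h : n < (Nat.sqrt n + 1)^2 := Nat.lt_succ_sqrt' n
    have hcs : (n:ℝ) ≤ (((Nat.sqrt n:ℕ):ℝ)+1)^2 := by exact_mod_cast le_of_lt h
    have h3 := Real.sqrt_le_sqrt hcs
    rw [Real.sqrt_sq (by positivity)] at h3
    have hs1 : (4:ℝ) ≤ ((Nat.sqrt n:ℕ):ℝ) := by exact_mod_cast hs4
    linarith
  have hMge : (n:ℝ)^((3:ℝ)/2) ≤ 2*((n * Nat.sqrt n : ℕ):ℝ) := by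
    rw [hMcast, ← h32]
    calc (n:ℝ) * (n:ℝ)^((1:ℝ)/2) = (n:ℝ) * Real.sqrt (n:ℝ) := by rw [hsqrt_eq]
      _ ≤ (n:ℝ) * (2*((Nat.sqrt n:ℕ):ℝ)) := mul_le_mul_of_nonneg_left hsq2 hn0
      _ = 2 * ((n:ℝ) * ((Nat.sqrt n:ℕ):ℝ)) := by ring
  have hMpos : (0:ℝ) < ((n * Nat.sqrt n : ℕ):ℝ) := by
    have : 1 ≤ n * Nat.sqrt n := by
      have := Nat.mul_le_mul (by omega : 1 ≤ n) (by omega : 1 ≤ Nat.sqrt n)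
      omega
    exact_mod_cast by omega
  -- error bound 2
  have hM1b : ((n*Nat.sqrt n:ℕ):ℝ)^(1-β) ≤ ((n:ℝ)^((3:ℝ)/2))^(1-β) :=
    Real.rpow_le_rpow hMpos.le hMle (by linarith)
  have hcomb : (n:ℝ)^(2*(β-1)) * ((n:ℝ)^((3:ℝ)/2))^(1-β) = (n:ℝ)^((β-1)/2) := by
    rw [← Real.rpow_mul hn0, ← Real.rpow_add hnpos]
    congr 1
    ring
  have herr2 : (n:ℝ)^(2*(β-1)) * (((n * Nat.sqrt n : ℕ):ℝ)^(1-β)/(1-β))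
      ≤ (n:ℝ)^((β-1)/2) / (1-β) := by
    have h1 : (n:ℝ)^(2*(β-1)) * ((n*Nat.sqrt n:ℕ):ℝ)^(1-β) ≤ (n:ℝ)^((β-1)/2) := by
      calc (n:ℝ)^(2*(β-1)) * ((n*Nat.sqrt n:ℕ):ℝ)^(1-β)
          ≤ (n:ℝ)^(2*(β-1)) * ((n:ℝ)^((3:ℝ)/2))^(1-β) :=
            mul_le_mul_of_nonneg_left hM1b hrp.le
        _ = (n:ℝ)^((β-1)/2) := hcomb
    calc (n:ℝ)^(2*(β-1)) * (((n*Nat.sqrt n:ℕ):ℝ)^(1-β)/(1-β))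
        = ((n:ℝ)^(2*(β-1)) * ((n*Nat.sqrt n:ℕ):ℝ)^(1-β))/(1-β) := by ring
      _ ≤ (n:ℝ)^((β-1)/2)/(1-β) := (div_le_div_iff_of_pos_right h1β).mpr h1
  -- error bound 3
  have hb1p : (0:ℝ) < β + 1 := by linarith
  have h1 : (n:ℝ)^((3:ℝ)/2)/2 ≤ ((n * Nat.sqrt n : ℕ):ℝ) := by linarith
  have h2 : ((n:ℝ)^((3:ℝ)/2)/2)^(β+1) ≤ ((n * Nat.sqrt n : ℕ):ℝ)^(β+1) :=
    Real.rpow_le_rpow (by positivity) h1 hb1p.le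
  have h3 : ((n:ℝ)^((3:ℝ)/2)/2)^(β+1) = (n:ℝ)^((3:ℝ)/2*(β+1)) / 2^(β+1) := by
    rw [Real.div_rpow (by positivity) (by norm_num : (0:ℝ) ≤ 2), ← Real.rpow_mul hn0]
  have h4 : (2:ℝ)^(β+1) ≤ 4 := by
    have hle : (2:ℝ)^(β+1) ≤ (2:ℝ)^(2:ℝ) :=
      Real.rpow_le_rpow_of_exponent_le one_le_two (by linarith)
    have h42 : (2:ℝ)^(2:ℝ) = 4 := by
      rw [show (2:ℝ) = ((2:ℕ):ℝ) by norm_num, Real.rpow_natCast]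
      norm_num
    linarith
  have h2pos : (0:ℝ) < (2:ℝ)^(β+1) := Real.rpow_pos_of_pos two_pos _
  have hnp : (0:ℝ) < (n:ℝ)^((3:ℝ)/2*(β+1)) := Real.rpow_pos_of_pos hnpos _
  have h5 : (n:ℝ)^((3:ℝ)/2*(β+1))/4 ≤ ((n * Nat.sqrt n : ℕ):ℝ)^(β+1) := by
    have hd : (n:ℝ)^((3:ℝ)/2*(β+1))/4 ≤ (n:ℝ)^((3:ℝ)/2*(β+1))/2^(β+1) :=
      div_le_div_of_nonneg_left hnp.le h2pos h4
    rw [← h3] at hd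
    linarith
  have h6 : ((n * Nat.sqrt n : ℕ):ℝ)^(-β-1) = (((n * Nat.sqrt n : ℕ):ℝ)^(β+1))⁻¹ := by
    rw [show (-β-1:ℝ) = -(β+1) by ring, Real.rpow_neg hMpos.le]
  have h7 : ((n * Nat.sqrt n : ℕ):ℝ)^(-β-1) ≤ 4 / (n:ℝ)^((3:ℝ)/2*(β+1)) := by
    rw [h6]
    have hhh := inv_anti₀ (by positivity : (0:ℝ) < (n:ℝ)^((3:ℝ)/2*(β+1))/4) h5
    rw [inv_div] at hhh
    exact hhh
  have hpow3 : (n:ℝ)^3 = (n:ℝ)^((3:ℝ)) := by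
    rw [show (3:ℝ) = ((3:ℕ):ℝ) by norm_num, Real.rpow_natCast]
  have herr3 : (n:ℝ)^(2*(β-1)) * (2*(n:ℝ)^3*((n * Nat.sqrt n : ℕ):ℝ)^(-β-1))
      ≤ 8 * (n:ℝ)^((β-1)/2) := by
    have hstep : (n:ℝ)^(2*(β-1)) * (2*(n:ℝ)^3*((n * Nat.sqrt n : ℕ):ℝ)^(-β-1))
        ≤ (n:ℝ)^(2*(β-1)) * (2*(n:ℝ)^3*(4 / (n:ℝ)^((3:ℝ)/2*(β+1)))) := by
      apply mul_le_mul_of_nonneg_left _ hrp.le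
      apply mul_le_mul_of_nonneg_left h7 (by positivity)
    have hcomb3 : (n:ℝ)^(2*(β-1)) * (2*(n:ℝ)^3*(4 / (n:ℝ)^((3:ℝ)/2*(β+1))))
        = 8 * (n:ℝ)^((β-1)/2) := by
      rw [hpow3, div_eq_mul_inv, ← Real.rpow_neg hn0]
      rw [show (n:ℝ)^(2*(β-1)) * (2*(n:ℝ)^(3:ℝ)*(4 * (n:ℝ)^(-((3:ℝ)/2*(β+1)))))
          = 8 * ((n:ℝ)^(2*(β-1)) * (n:ℝ)^(3:ℝ) * (n:ℝ)^(-((3:ℝ)/2*(β+1)))) by ring]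
      rw [← Real.rpow_add hnpos, ← Real.rpow_add hnpos]
      rw [show (2*(β-1) + 3 + -((3:ℝ)/2*(β+1)) : ℝ) = (β-1)/2 by ring]
    linarith
  -- combine
  have hTb := T_bounds hβ0 hβ1 hA0
  have hlow := lambda_lower hβ0 hβ1 (by omega : 2 ≤ n)
  have hup := lambda_upper hβ0 hβ1 hn
  obtain ⟨hT1, hT2⟩ := hTb
  have h3div : (n:ℝ)^(2*(β-1)) * (1/(1-β)) ≤ (10/(1-β)) * (n:ℝ)^((β-1)/2) := by
    calc (n:ℝ)^(2*(β-1)) * (1/(1-β)) ≤ (n:ℝ)^((β-1)/2) * (1/(1-β)) :=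
          mul_le_mul_of_nonneg_right herr1 (by positivity)
      _ ≤ (10/(1-β)) * (n:ℝ)^((β-1)/2) := by
          rw [mul_comm]
          apply mul_le_mul_of_nonneg_right _ hEpos.le
          exact (div_le_div_iff_of_pos_right h1β).mpr (by norm_num)
  constructor
  · have hc1 : ((n:ℝ)*((n:ℝ)-1)/2)^(1-β) * (Real.Gamma β/(1-β)) - 1/(1-β)
        ≤ ∑' k : ℕ, ((k:ℝ)+1)^(-β) * collisionProb (k+1) n := le_trans hT1 hlow
    have hc2 := mul_le_mul_of_nonneg_left hc1 hrp.le
    have hc3 : (n:ℝ)^(2*(β-1)) * (((n:ℝ)*((n:ℝ)-1)/2)^(1-β) * (Real.Gamma β/(1-β)) - 1/(1-β))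
        = (n:ℝ)^(2*(β-1)) * ((n:ℝ)*((n:ℝ)-1)/2)^(1-β) * (Real.Gamma β/(1-β))
          - (n:ℝ)^(2*(β-1)) * (1/(1-β)) := by ring
    rw [hc3] at hc2
    linarith
  · have hc1 : ∑' k : ℕ, ((k:ℝ)+1)^(-β) * collisionProb (k+1) n
        ≤ (1 + ((n:ℝ)*((n:ℝ)-1)/2)^(1-β) * (Real.Gamma β/(1-β)))
          + ((n*Nat.sqrt n : ℕ):ℝ)^(1-β)/(1-β)
          + 2*(n:ℝ)^3 * ((n*Nat.sqrt n : ℕ):ℝ)^(-β-1) := by linarith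
    have htot : (n:ℝ)^((β-1)/2) + (n:ℝ)^((β-1)/2)/(1-β) + 8*(n:ℝ)^((β-1)/2)
        ≤ (10/(1-β)) * (n:ℝ)^((β-1)/2) := by
      have heq : (n:ℝ)^((β-1)/2) + (n:ℝ)^((β-1)/2)/(1-β) + 8*(n:ℝ)^((β-1)/2)
          = (9*(1-β)+1)/(1-β) * (n:ℝ)^((β-1)/2) := by
        field_simp
        ring
      rw [heq]
      apply mul_le_mul_of_nonneg_right _ hEpos.le
      apply (div_le_div_iff_of_pos_right h1β).mpr
      nlinarith
    calc (n:ℝ)^(2*(β-1)) * ∑' k : ℕ, ((k:ℝ)+1)^(-β) * collisionProb (k+1) n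
        ≤ (n:ℝ)^(2*(β-1)) * ((1 + ((n:ℝ)*((n:ℝ)-1)/2)^(1-β) * (Real.Gamma β/(1-β)))
            + ((n*Nat.sqrt n : ℕ):ℝ)^(1-β)/(1-β)
            + 2*(n:ℝ)^3 * ((n*Nat.sqrt n : ℕ):ℝ)^(-β-1)) :=
          mul_le_mul_of_nonneg_left hc1 hrp.le
      _ = (n:ℝ)^(2*(β-1)) * ((n:ℝ)*((n:ℝ)-1)/2)^(1-β) * (Real.Gamma β/(1-β))
          + ((n:ℝ)^(2*(β-1))
             + (n:ℝ)^(2*(β-1)) * (((n*Nat.sqrt n : ℕ):ℝ)^(1-β)/(1-β))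
             + (n:ℝ)^(2*(β-1)) * (2*(n:ℝ)^3*((n*Nat.sqrt n : ℕ):ℝ)^(-β-1))) := by
          ring
      _ ≤ (n:ℝ)^(2*(β-1)) * ((n:ℝ)*((n:ℝ)-1)/2)^(1-β) * (Real.Gamma β/(1-β))
          + (10/(1-β)) * (n:ℝ)^((β-1)/2) := by
          have hEsum : (n:ℝ)^(2*(β-1))
              + (n:ℝ)^(2*(β-1)) * (((n*Nat.sqrt n : ℕ):ℝ)^(1-β)/(1-β))
              + (n:ℝ)^(2*(β-1)) * (2*(n:ℝ)^3*((n*Nat.sqrt n : ℕ):ℝ)^(-β-1))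
              ≤ (10/(1-β)) * (n:ℝ)^((β-1)/2) := by
            linarith
          linarith

lemma main_tendsto {β : ℝ} (hβ0 : 0 < β) (hβ1 : β < 1) :
    Tendsto (fun n : ℕ =>
        (n:ℝ)^(2*(β-1)) * ((n:ℝ)*((n:ℝ)-1)/2)^(1-β) * (Real.Gamma β/(1-β)))
      atTop (𝓝 (2^(β-1) * Real.Gamma β / (1-β))) := by
  have h1β : (0:ℝ) < 1-β := by linarith
  have hhalf : Tendsto (fun n : ℕ => ((n:ℝ)*((n:ℝ)-1)/2) / ((n:ℝ)^(2:ℝ))) atTop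
      (𝓝 (1/2)) := by
    have hbase : Tendsto (fun n : ℕ => 1/2 - 1/2 * (1/(n:ℝ))) atTop (𝓝 (1/2)) := by
      have h2 := tendsto_one_div_atTop_nhds_zero_nat.const_mul (1/2 : ℝ)
      have h3 := (tendsto_const_nhds (x := (1/2:ℝ)) (f := atTop (α := ℕ))).sub h2
      simpa using h3
    apply hbase.congr'
    filter_upwards [eventually_ge_atTop 1] with n hn
    have hnpos : (0:ℝ) < (n:ℝ) := by exact_mod_cast (by omega : 0 < n)
    have h2 : (n:ℝ)^(2:ℝ) = (n:ℝ)^(2:ℕ) := by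
      rw [show (2:ℝ) = ((2:ℕ):ℝ) by norm_num, Real.rpow_natCast]
    rw [h2]
    field_simp
  have hpow := hhalf.rpow_const (Or.inr (by linarith : (0:ℝ) ≤ 1-β))
  have hval : ((1:ℝ)/2)^(1-β) = (2:ℝ)^(β-1) := by
    rw [show (1/2:ℝ) = 2⁻¹ by norm_num, ← Real.rpow_neg_one 2,
      ← Real.rpow_mul (by norm_num : (0:ℝ) ≤ 2)]
    congr 1
    ring
  have hmul := hpow.mul_const (Real.Gamma β/(1-β))
  rw [hval] at hmul
  have hfinal : (2:ℝ)^(β-1) * (Real.Gamma β/(1-β)) = 2^(β-1) * Real.Gamma β / (1-β) := by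
    ring
  rw [hfinal] at hmul
  apply hmul.congr'
  filter_upwards [eventually_ge_atTop 1] with n hn
  have hnpos : (0:ℝ) < (n:ℝ) := by exact_mod_cast (by omega : 0 < n)
  have hn1 : (1:ℝ) ≤ (n:ℝ) := by exact_mod_cast hn
  have hA0 : (0:ℝ) ≤ (n:ℝ)*((n:ℝ)-1)/2 := by nlinarith
  have hn2 : (0:ℝ) < (n:ℝ)^(2:ℝ) := Real.rpow_pos_of_pos hnpos _
  have e1 : (((n:ℝ)*((n:ℝ)-1)/2) / ((n:ℝ)^(2:ℝ)))^(1-β)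
      = ((n:ℝ)*((n:ℝ)-1)/2)^(1-β) / ((n:ℝ)^(2:ℝ))^(1-β) :=
    Real.div_rpow hA0 hn2.le (1-β)
  have e2 : ((n:ℝ)^(2:ℝ))^(1-β) = (n:ℝ)^(2*(1-β)) := (Real.rpow_mul hnpos.le 2 (1-β)).symm
  have e3 : (n:ℝ)^(2*(β-1)) = ((n:ℝ)^(2*(1-β)))⁻¹ := by
    rw [show (2*(β-1):ℝ) = -(2*(1-β)) by ring, Real.rpow_neg hnpos.le]
  have hpos : (0:ℝ) < (n:ℝ)^(2*(1-β)) := Real.rpow_pos_of_pos hnpos _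
  rw [e1, e2, e3]
  ring

end TRA


/-- For `β ∈ (0,1)`, with `λₙ = ∑_{k≥1} k^{-β} P(𝒞ᵏₙ)`,
`lim_{n→∞} n^{2(β-1)} λₙ = 2^{β-1} Γ(β) / (1-β)`. -/
theorem total_rate_asymptotics (β : ℝ) (hβ0 : 0 < β) (hβ1 : β < 1) :
    Tendsto
      (fun n : ℕ =>
        (n : ℝ) ^ (2 * (β - 1)) *
          ∑' k : ℕ, ((k : ℝ) + 1) ^ (-β) * collisionProb (k + 1) n)
      atTop (nhds (2 ^ (β - 1) * Real.Gamma β / (1 - β))) := by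
  have h1β : (0:ℝ) < 1 - β := by linarith
  have hmain := TRA.main_tendsto hβ0 hβ1
  have he : Tendsto (fun n : ℕ => (n:ℝ)^((β-1)/2)) atTop (𝓝 0) := by
    have h := (tendsto_rpow_neg_atTop (by linarith : (0:ℝ) < (1-β)/2)).comp
      (tendsto_natCast_atTop_atTop (R := ℝ))
    apply h.congr
    intro n
    simp only [Function.comp]
    rw [show (-(((1:ℝ)-β)/2)) = (β-1)/2 by ring]
  have hg : Tendsto (fun n : ℕ =>
      (n:ℝ)^(2*(β-1)) * ((n:ℝ)*((n:ℝ)-1)/2)^(1-β) * (Real.Gamma β/(1-β))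
        - (10/(1-β)) * (n:ℝ)^((β-1)/2)) atTop
      (𝓝 (2^(β-1) * Real.Gamma β / (1-β))) := by
    have h := hmain.sub (he.const_mul (10/(1-β)))
    simpa using h
  have hup : Tendsto (fun n : ℕ =>
      (n:ℝ)^(2*(β-1)) * ((n:ℝ)*((n:ℝ)-1)/2)^(1-β) * (Real.Gamma β/(1-β))
        + (10/(1-β)) * (n:ℝ)^((β-1)/2)) atTop
      (𝓝 (2^(β-1) * Real.Gamma β / (1-β))) := by
    have h := hmain.add (he.const_mul (10/(1-β)))
    simpa using h
  apply tendsto_of_tendsto_of_tendsto_of_le_of_le' hg hup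
  · filter_upwards [eventually_ge_atTop 16] with n hn
    exact (TRA.final_ineq hβ0 hβ1 hn).1
  · filter_upwards [eventually_ge_atTop 16] with n hn
    exact (TRA.final_ineq hβ0 hβ1 hn).2
end

section
/- Define $\lambda_n = \sum_{k=1}^{\infty} k^{-1} \mathbb{P}(\mathcal{C}^k_n)$, where $\mathcal{C}^k_n$ is the event that at least two of $n$ balls thrown uniformly at random into $k$ boxes share a box. Then $\lim_{n \to \infty} \frac{\lambda_n}{\log n} = 2$. -/
open Filter

open Finset in
lemma my_weierstrass (s : Finset ℕ) (x : ℕ → ℝ) (h0 : ∀ i ∈ s, 0 ≤ x i)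
    (h1 : ∀ i ∈ s, x i ≤ 1) : 1 - ∑ i ∈ s, x i ≤ ∏ i ∈ s, (1 - x i) := by
  classical
  induction s using Finset.induction with
  | empty => simp
  | insert _ _ ha ih =>
    rename_i a s
    rw [Finset.sum_insert ha, Finset.prod_insert ha]
    have hxa0 := h0 a (mem_insert_self a s)
    have hxa1 := h1 a (mem_insert_self a s)
    have ihs := ih (fun i hi => h0 i (mem_insert_of_mem hi))
      (fun i hi => h1 i (mem_insert_of_mem hi))
    have hS : 0 ≤ ∑ i ∈ s, x i := Finset.sum_nonneg fun i hi => h0 i (mem_insert_of_mem hi)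
    nlinarith [mul_le_mul_of_nonneg_left ihs (by linarith : (0:ℝ) ≤ 1 - x a)]

lemma my_prod_le_exp (s : Finset ℕ) (x : ℕ → ℝ) (h1 : ∀ i ∈ s, x i ≤ 1) :
    ∏ i ∈ s, (1 - x i) ≤ Real.exp (-∑ i ∈ s, x i) := by
  have h : Real.exp (-∑ i ∈ s, x i) = ∏ i ∈ s, Real.exp (-x i) := by
    rw [← Real.exp_sum, ← Finset.sum_neg_distrib]
  rw [h]
  apply Finset.prod_le_prod
  · exact fun i hi => by linarith [h1 i hi]
  · intro i hi
    have := Real.add_one_le_exp (-x i)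
    linarith

lemma my_sum_Icc (n : ℕ) : ∑ i ∈ Finset.Icc 2 n, ((i:ℝ) - 1) = (n:ℝ) * ((n:ℝ) - 1) / 2 := by
  induction n with
  | zero => simp
  | succ n ih =>
    rcases Nat.lt_or_ge n 1 with h | h
    · interval_cases n <;> simp [Finset.Icc_self]
    · rw [Finset.sum_Icc_succ_top (by omega), ih]; push_cast; ring

lemma cp_eq {k n : ℕ} (hk : 1 ≤ k) (h : n ≤ k) :
    collisionProb k n = 1 - ∏ i ∈ Finset.Icc 2 n, (1 - ((i:ℝ)-1)/k) := by
  rw [collisionProb, if_neg (by omega)]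
  congr 1
  apply Finset.prod_congr rfl
  intro i _
  have hk0 : (k:ℝ) ≠ 0 := Nat.cast_ne_zero.mpr (by omega)
  field_simp
  ring

lemma x_mem {k n : ℕ} (h : n ≤ k) {i : ℕ} (hi : i ∈ Finset.Icc 2 n) :
    0 ≤ ((i:ℝ)-1)/k ∧ ((i:ℝ)-1)/k ≤ 1 := by
  rw [Finset.mem_Icc] at hi
  have hk : (0:ℝ) < k := by
    have : 0 < k := by omega
    exact_mod_cast this
  have h1 : (1:ℝ) ≤ (i:ℝ) := by exact_mod_cast Nat.one_le_iff_ne_zero.mpr (by omega)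
  have h2 : (i:ℝ) ≤ k := by exact_mod_cast le_trans hi.2 h
  constructor
  · apply div_nonneg (by linarith) hk.le
  · rw [div_le_one hk]; linarith

lemma cp_nonneg {k n : ℕ} (hk : 1 ≤ k) : 0 ≤ collisionProb k n := by
  rcases Nat.lt_or_ge k n with h | h
  · rw [collisionProb, if_pos h]; norm_num
  · rw [cp_eq hk h]
    have : ∏ i ∈ Finset.Icc 2 n, (1 - ((i:ℝ)-1)/k) ≤ 1 := by
      apply Finset.prod_le_one
      · exact fun i hi => by linarith [(x_mem h hi).2]
      · exact fun i hi => by linarith [(x_mem h hi).1]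
    linarith

lemma cp_le_one {k n : ℕ} (hk : 1 ≤ k) : collisionProb k n ≤ 1 := by
  rcases Nat.lt_or_ge k n with h | h
  · rw [collisionProb, if_pos h]
  · rw [cp_eq hk h]
    have : 0 ≤ ∏ i ∈ Finset.Icc 2 n, (1 - ((i:ℝ)-1)/k) :=
      Finset.prod_nonneg fun i hi => by linarith [(x_mem h hi).1, (x_mem h hi).2]
    linarith

lemma cp_le {k n : ℕ} (hk : 1 ≤ k) (h : n ≤ k) :
    collisionProb k n ≤ ((n:ℝ) * ((n:ℝ)-1) / 2) / k := by
  rw [cp_eq hk h]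
  have hw := my_weierstrass (Finset.Icc 2 n) (fun i => ((i:ℝ)-1)/k)
    (fun i hi => (x_mem h hi).1) (fun i hi => (x_mem h hi).2)
  have hs : ∑ i ∈ Finset.Icc 2 n, ((i:ℝ)-1)/k = ((n:ℝ) * ((n:ℝ)-1) / 2) / k := by
    rw [← Finset.sum_div, my_sum_Icc]
  rw [← hs]
  linarith [hw]

lemma cp_ge {k n : ℕ} (hk : 1 ≤ k) (h : n ≤ k) :
    1 - Real.exp (-(((n:ℝ) * ((n:ℝ)-1) / 2) / k)) ≤ collisionProb k n := by
  rw [cp_eq hk h]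
  have hp := my_prod_le_exp (Finset.Icc 2 n) (fun i => ((i:ℝ)-1)/k)
    (fun i hi => (x_mem h hi).2)
  have hs : ∑ i ∈ Finset.Icc 2 n, ((i:ℝ)-1)/k = ((n:ℝ) * ((n:ℝ)-1) / 2) / k := by
    rw [← Finset.sum_div, my_sum_Icc]
  rw [hs] at hp
  linarith

lemma log_step_le (k : ℕ) : Real.log (k+2) - Real.log (k+1) ≤ ((k:ℝ)+1)⁻¹ := by
  have h1 : (0:ℝ) < (k:ℝ)+1 := by positivity
  have h2 : (0:ℝ) < (k:ℝ)+2 := by positivity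
  rw [← Real.log_div (by positivity) (by positivity)]
  have := Real.log_le_sub_one_of_pos (show (0:ℝ) < ((k:ℝ)+2)/((k:ℝ)+1) by positivity)
  have heq : ((k:ℝ)+2)/((k:ℝ)+1) - 1 = ((k:ℝ)+1)⁻¹ := by field_simp; norm_num
  linarith [heq ▸ this]

lemma le_log_step (k : ℕ) (hk : 1 ≤ k) : ((k:ℝ)+1)⁻¹ ≤ Real.log (k+1) - Real.log k := by
  have hk0 : (0:ℝ) < k := by exact_mod_cast hk
  rw [← Real.log_div (by positivity) (by positivity)]
  have := Real.log_le_sub_one_of_pos (show (0:ℝ) < (k:ℝ)/((k:ℝ)+1) by positivity)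
  have h2 : Real.log ((k:ℝ)/((k:ℝ)+1)) = - Real.log (((k:ℝ)+1)/(k:ℝ)) := by
    rw [← Real.log_inv]; congr 1; field_simp
  have heq : (k:ℝ)/((k:ℝ)+1) - 1 = -((k:ℝ)+1)⁻¹ := by field_simp; ring
  rw [h2] at this
  linarith [heq ▸ this]

lemma harmonic_le (M : ℕ) : ∑ k ∈ Finset.range M, ((k:ℝ)+1)⁻¹ ≤ 1 + Real.log M := by
  induction M with
  | zero => simp
  | succ M ih =>
    rcases Nat.eq_zero_or_pos M with rfl | hM
    · simp
    · rw [Finset.sum_range_succ]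
      have h1 := le_log_step M hM
      push_cast
      push_cast at ih h1
      linarith

lemma le_harmonic (M : ℕ) : Real.log (M+1) ≤ ∑ k ∈ Finset.range M, ((k:ℝ)+1)⁻¹ := by
  induction M with
  | zero => simp
  | succ M ih =>
    rw [Finset.sum_range_succ]
    have h1 := log_step_le M
    push_cast
    rw [show (M:ℝ)+1+1 = (M:ℝ)+2 by ring]
    push_cast at ih h1
    linarith

lemma f_nonneg (n k : ℕ) : 0 ≤ ((k:ℝ)+1)⁻¹ * collisionProb (k+1) n := by
  apply mul_nonneg (by positivity) (cp_nonneg (by omega))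

lemma f_le (n k : ℕ) :
    ((k:ℝ)+1)⁻¹ * collisionProb (k+1) n ≤ (n:ℝ)^2 * (((k:ℝ)+1)^2)⁻¹ := by
  have hk1 : (0:ℝ) < (k:ℝ)+1 := by positivity
  have hn0 : (0:ℝ) ≤ (n:ℝ) := Nat.cast_nonneg n
  rcases Nat.lt_or_ge (k+1) n with h | h
  · have hcp : collisionProb (k+1) n = 1 := by rw [collisionProb, if_pos h]
    rw [hcp, mul_one]
    have hkn : (k:ℝ)+1 ≤ (n:ℝ)^2 := by
      have h1 : (k+1 : ℕ) ≤ n^2 := le_trans h.le (Nat.le_self_pow (by norm_num) n)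
      exact_mod_cast h1
    have heq : ((k:ℝ)+1)⁻¹ = ((k:ℝ)+1) * (((k:ℝ)+1)^2)⁻¹ := by
      field_simp
    rw [heq]
    exact mul_le_mul_of_nonneg_right hkn (by positivity)
  · have hcp := cp_le (k := k+1) (n := n) (by omega) h
    have hcast : ((k+1:ℕ):ℝ) = (k:ℝ)+1 := by push_cast; ring
    rw [hcast] at hcp
    calc ((k:ℝ)+1)⁻¹ * collisionProb (k+1) n
        ≤ ((k:ℝ)+1)⁻¹ * (((n:ℝ) * ((n:ℝ)-1) / 2) / ((k:ℝ)+1)) :=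
          mul_le_mul_of_nonneg_left hcp (by positivity)
      _ = ((n:ℝ) * ((n:ℝ)-1) / 2) * (((k:ℝ)+1)^2)⁻¹ := by
          rw [div_eq_mul_inv, pow_two, mul_inv]; ring
      _ ≤ (n:ℝ)^2 * (((k:ℝ)+1)^2)⁻¹ := by
          apply mul_le_mul_of_nonneg_right ?_ (by positivity)
          nlinarith

lemma summable_f (n : ℕ) : Summable (fun k : ℕ => ((k:ℝ)+1)⁻¹ * collisionProb (k+1) n) := by
  apply Summable.of_nonneg_of_le (f_nonneg n) (f_le n)
  apply Summable.mul_left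
  have hs : Summable (fun k : ℕ => ((k:ℝ)^2)⁻¹) := by
    simpa using summable_one_div_nat_pow.mpr (show 1 < 2 by norm_num)
  have := (summable_nat_add_iff 1).mpr hs
  simpa using this

lemma lambda_upper (n : ℕ) (hn : 2 ≤ n) :
    (∑' k : ℕ, ((k:ℝ)+1)⁻¹ * collisionProb (k+1) n) ≤ 2 * Real.log n + 2 := by
  have hsum := summable_f n
  set M := n^2 with hM
  rw [← Summable.sum_add_tsum_nat_add M hsum]
  have hMn : n ≤ M := by
    rw [hM]; nlinarith
  have partA : ∑ k ∈ Finset.range M, ((k:ℝ)+1)⁻¹ * collisionProb (k+1) n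
      ≤ 1 + 2 * Real.log n := by
    have h1 : ∑ k ∈ Finset.range M, ((k:ℝ)+1)⁻¹ * collisionProb (k+1) n
        ≤ ∑ k ∈ Finset.range M, ((k:ℝ)+1)⁻¹ := by
      apply Finset.sum_le_sum
      intro k _
      have hc1 := cp_le_one (k := k+1) (n := n) (by omega)
      have hk1 : (0:ℝ) ≤ ((k:ℝ)+1)⁻¹ := by positivity
      nlinarith
    have h2 := harmonic_le M
    have h3 : Real.log (M:ℝ) = 2 * Real.log n := by
      rw [hM]; push_cast; rw [Real.log_pow]; push_cast; ring
    linarith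
  have partB : (∑' j : ℕ, (((j + M : ℕ):ℝ)+1)⁻¹ * collisionProb ((j + M) + 1) n) ≤ 1 := by
    apply Real.tsum_le_of_sum_range_le (fun j => f_nonneg n (j+M))
    intro J
    set g : ℕ → ℝ := fun j => ((j:ℝ)+(M:ℝ))⁻¹ with hg
    have hM0 : (0:ℝ) < (M:ℝ) := by
      have : 0 < M := by omega
      exact_mod_cast this
    have hterm : ∀ j ∈ Finset.range J, (((j + M:ℕ):ℝ)+1)⁻¹ * collisionProb ((j + M) + 1) n
        ≤ ((n:ℝ)^2/2) * (g j - g (j+1)) := by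
      intro j _
      have ha0 : (0:ℝ) < (j:ℝ) + (M:ℝ) := by positivity
      have hcast : ((j + M + 1:ℕ):ℝ) = (j:ℝ) + (M:ℝ) + 1 := by push_cast; ring
      have hcp := cp_le (k := j + M + 1) (n := n) (by omega) (by omega)
      rw [hcast] at hcp
      have hstep1 : (((j + M:ℕ):ℝ)+1)⁻¹ * collisionProb ((j + M) + 1) n
          ≤ ((j:ℝ)+(M:ℝ)+1)⁻¹ * (((n:ℝ) * ((n:ℝ)-1) / 2) / ((j:ℝ)+(M:ℝ)+1)) := by
        have hc2 : ((j + M:ℕ):ℝ) + 1 = (j:ℝ) + (M:ℝ) + 1 := by push_cast; ring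
        rw [hc2]
        exact mul_le_mul_of_nonneg_left hcp (by positivity)
      have heq : ((j:ℝ)+(M:ℝ)+1)⁻¹ * (((n:ℝ) * ((n:ℝ)-1) / 2) / ((j:ℝ)+(M:ℝ)+1))
          = ((n:ℝ) * ((n:ℝ)-1) / 2) * ((((j:ℝ)+(M:ℝ)+1)^2)⁻¹) := by
        rw [div_eq_mul_inv, pow_two, mul_inv]; ring
      have hgdiff : g j - g (j+1) = (((j:ℝ)+(M:ℝ)) * ((j:ℝ)+(M:ℝ)+1))⁻¹ := by
        have key : ∀ a : ℝ, 0 < a → a⁻¹ - (a+1)⁻¹ = (a*(a+1))⁻¹ := by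
          intro a ha; rw [mul_inv]; field_simp; ring
        rw [hg]
        push_cast
        rw [show ((j:ℝ)+1+(M:ℝ)) = (j:ℝ)+(M:ℝ)+1 by ring]
        exact key _ ha0
      have hinv : ((((j:ℝ)+(M:ℝ)+1)^2)⁻¹) ≤ (((j:ℝ)+(M:ℝ)) * ((j:ℝ)+(M:ℝ)+1))⁻¹ := by
        apply inv_anti₀ (by positivity)
        nlinarith
      have hnn : 0 ≤ (n:ℝ) * ((n:ℝ)-1) / 2 := by
        have h2 : (2:ℝ) ≤ (n:ℝ) := by exact_mod_cast hn
        nlinarith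
      have hnsq : (n:ℝ) * ((n:ℝ)-1) / 2 ≤ (n:ℝ)^2/2 := by nlinarith [Nat.cast_nonneg (α := ℝ) n]
      calc (((j + M:ℕ):ℝ)+1)⁻¹ * collisionProb ((j + M) + 1) n
          ≤ ((n:ℝ) * ((n:ℝ)-1) / 2) * ((((j:ℝ)+(M:ℝ)+1)^2)⁻¹) := heq ▸ hstep1
        _ ≤ ((n:ℝ)^2/2) * (((j:ℝ)+(M:ℝ)) * ((j:ℝ)+(M:ℝ)+1))⁻¹ :=
            mul_le_mul hnsq hinv (by positivity) (by positivity)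
        _ = ((n:ℝ)^2/2) * (g j - g (j+1)) := by rw [hgdiff]
    calc ∑ j ∈ Finset.range J, (((j + M:ℕ):ℝ)+1)⁻¹ * collisionProb ((j + M) + 1) n
        ≤ ∑ j ∈ Finset.range J, ((n:ℝ)^2/2) * (g j - g (j+1)) := Finset.sum_le_sum hterm
      _ = ((n:ℝ)^2/2) * (g 0 - g J) := by rw [← Finset.mul_sum, Finset.sum_range_sub' g]
      _ ≤ 1 := by
          have hg0 : g 0 = (M:ℝ)⁻¹ := by rw [hg]; norm_num
          have hgJ : 0 ≤ g J := by rw [hg]; positivity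
          have hMcast : (M:ℝ) = (n:ℝ)^2 := by rw [hM]; push_cast; ring
          have hn0 : (0:ℝ) < (n:ℝ)^2 := by
            have : (0:ℝ) < (n:ℝ) := by exact_mod_cast (by omega : 0 < n)
            positivity
          rw [hg0, hMcast]
          rw [show ((n:ℝ)^2/2) * (((n:ℝ)^2)⁻¹ - g J) = 1/2 - ((n:ℝ)^2/2) * g J by
            field_simp]
          nlinarith
  linarith

lemma lambda_lower (n m : ℕ) (hn : 2 ≤ n) (hm : 1 ≤ m) :
    (1 - Real.exp (-(m:ℝ))) * (2 * Real.log n - Real.log (4*(m:ℝ)))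
      ≤ ∑' k : ℕ, ((k:ℝ)+1)⁻¹ * collisionProb (k+1) n := by
  set δ := Real.exp (-(m:ℝ)) with hδ
  have hδ0 : 0 < δ := Real.exp_pos _
  have hδ1 : δ ≤ 1 := by
    rw [hδ, Real.exp_le_one_iff]
    simp
  have h1δ : 0 ≤ 1 - δ := by linarith
  set Ml := n*(n-1)/(2*m) with hMl
  have hterm : ∀ k ∈ Finset.range Ml, (1-δ) * ((k:ℝ)+1)⁻¹
      ≤ ((k:ℝ)+1)⁻¹ * collisionProb (k+1) n := by
    intro k hk
    rw [Finset.mem_range] at hk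
    have hk1 : (0:ℝ) < (k:ℝ)+1 := by positivity
    have hcpge : 1 - δ ≤ collisionProb (k+1) n := by
      rcases Nat.lt_or_ge (k+1) n with h | h
      · rw [collisionProb, if_pos h]; linarith
      · have hge := cp_ge (k := k+1) (n := n) (by omega) h
        have hcast : ((k+1:ℕ):ℝ) = (k:ℝ)+1 := by push_cast; ring
        rw [hcast] at hge
        have hkm : (k+1) * (2*m) ≤ n*(n-1) := by
          calc (k+1)*(2*m) ≤ Ml * (2*m) := Nat.mul_le_mul_right _ (by omega)
            _ ≤ n*(n-1) := Nat.div_mul_le_self _ _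
        have harg : (m:ℝ) ≤ ((n:ℝ)*((n:ℝ)-1)/2)/((k:ℝ)+1) := by
          rw [le_div_iff₀ hk1]
          have hc : ((k:ℝ)+1)*(2*(m:ℝ)) ≤ (n:ℝ)*((n:ℝ)-1) := by
            have := hkm
            have hsub : ((n-1:ℕ):ℝ) = (n:ℝ)-1 := by
              rw [Nat.cast_sub (by omega)]; norm_num
            calc ((k:ℝ)+1)*(2*(m:ℝ)) = (((k+1)*(2*m) : ℕ) : ℝ) := by push_cast; ring
              _ ≤ ((n*(n-1) : ℕ) : ℝ) := by exact_mod_cast this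
              _ = (n:ℝ)*((n:ℝ)-1) := by rw [Nat.cast_mul, hsub]
          linarith
        have hexp : Real.exp (-(((n:ℝ)*((n:ℝ)-1)/2)/((k:ℝ)+1))) ≤ δ :=
          Real.exp_le_exp.mpr (by linarith)
        linarith
    calc (1-δ)*((k:ℝ)+1)⁻¹ = ((k:ℝ)+1)⁻¹ * (1-δ) := mul_comm _ _
      _ ≤ ((k:ℝ)+1)⁻¹ * collisionProb (k+1) n :=
          mul_le_mul_of_nonneg_left hcpge (by positivity)
  have hsum1 : (1-δ) * ∑ k ∈ Finset.range Ml, ((k:ℝ)+1)⁻¹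
      ≤ ∑ k ∈ Finset.range Ml, ((k:ℝ)+1)⁻¹ * collisionProb (k+1) n := by
    rw [Finset.mul_sum]; exact Finset.sum_le_sum hterm
  have hsum2 : ∑ k ∈ Finset.range Ml, ((k:ℝ)+1)⁻¹ * collisionProb (k+1) n
      ≤ ∑' k : ℕ, ((k:ℝ)+1)⁻¹ * collisionProb (k+1) n :=
    Summable.sum_le_tsum _ (fun k _ => f_nonneg n k) (summable_f n)
  have hm0 : (0:ℝ) < (m:ℝ) := by exact_mod_cast hm
  have hn0 : (0:ℝ) < (n:ℝ) := by exact_mod_cast (by omega : 0 < n)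
  have hn2 : (2:ℝ) ≤ (n:ℝ) := by exact_mod_cast hn
  have hlog : 2*Real.log n - Real.log (4*(m:ℝ)) ≤ Real.log ((Ml:ℝ)+1) := by
    have hmlt : n*(n-1) < (Ml+1)*(2*m) := by
      have h1 := Nat.lt_mul_div_succ (n*(n-1)) (show 0 < 2*m by omega)
      rw [hMl]
      simpa [Nat.mul_comm] using h1
    have hsub : ((n-1:ℕ):ℝ) = (n:ℝ)-1 := by
      rw [Nat.cast_sub (by omega)]; norm_num
    have hcast : (n:ℝ)*((n:ℝ)-1) < ((Ml:ℝ)+1)*(2*(m:ℝ)) := by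
      calc (n:ℝ)*((n:ℝ)-1) = ((n*(n-1) : ℕ) : ℝ) := by rw [Nat.cast_mul, hsub]
        _ < (((Ml+1)*(2*m) : ℕ) : ℝ) := by exact_mod_cast hmlt
        _ = ((Ml:ℝ)+1)*(2*(m:ℝ)) := by push_cast; ring
    have hdiv : (n:ℝ)*((n:ℝ)-1)/(2*(m:ℝ)) ≤ (Ml:ℝ)+1 := by
      rw [div_le_iff₀ (by positivity)]
      linarith
    have hq : (n:ℝ)^2/(4*(m:ℝ)) ≤ (n:ℝ)*((n:ℝ)-1)/(2*(m:ℝ)) := by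
      rw [div_le_div_iff₀ (by positivity) (by positivity)]
      nlinarith [mul_nonneg (le_of_lt hm0) (mul_nonneg (le_of_lt hn0)
        (show (0:ℝ) ≤ (n:ℝ) - 2 by linarith))]
    have hpos : (0:ℝ) < (n:ℝ)^2/(4*(m:ℝ)) := by positivity
    have hlog1 : Real.log ((n:ℝ)^2/(4*(m:ℝ))) ≤ Real.log ((Ml:ℝ)+1) :=
      Real.log_le_log (by positivity) (by linarith)
    have hlog2 : Real.log ((n:ℝ)^2/(4*(m:ℝ))) = 2*Real.log n - Real.log (4*(m:ℝ)) := by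
      rw [Real.log_div (by positivity) (by positivity)]
      rw [show (n:ℝ)^2 = (n:ℝ)^(2:ℕ) by norm_num, Real.log_pow]
      push_cast; ring
    linarith
  have hH := le_harmonic Ml
  calc (1-δ)*(2*Real.log n - Real.log (4*(m:ℝ)))
      ≤ (1-δ)*Real.log ((Ml:ℝ)+1) := mul_le_mul_of_nonneg_left hlog h1δ
    _ ≤ (1-δ) * ∑ k ∈ Finset.range Ml, ((k:ℝ)+1)⁻¹ := mul_le_mul_of_nonneg_left hH h1δ
    _ ≤ ∑ k ∈ Finset.range Ml, ((k:ℝ)+1)⁻¹ * collisionProb (k+1) n := hsum1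
    _ ≤ _ := hsum2

/-- With `λₙ = ∑_{k≥1} k^{-1} P(𝒞ᵏₙ)`, one has `lim_{n→∞} λₙ / log n = 2`. -/
theorem total_rate_asymptotics_beta_one :
    Tendsto
      (fun n : ℕ =>
        (∑' k : ℕ, ((k : ℝ) + 1)⁻¹ * collisionProb (k + 1) n) / Real.log n)
      atTop (nhds 2) := by
  rw [Metric.tendsto_atTop]
  intro ε hε
  set m : ℕ := ⌈(4:ℝ)/ε⌉₊ + 1 with hm
  have hm1 : 1 ≤ m := by omega
  have hmR : (0:ℝ) < m := by exact_mod_cast hm1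
  set δ := Real.exp (-(m:ℝ)) with hδ
  have hδ0 : 0 < δ := Real.exp_pos _
  have hδm : δ ≤ 1/(m:ℝ) := by
    rw [hδ, Real.exp_neg, inv_eq_one_div]
    apply one_div_le_one_div_of_le hmR
    linarith [Real.add_one_le_exp ((m:ℝ))]
  have hδε : δ ≤ ε/4 := by
    apply le_trans hδm
    rw [div_le_div_iff₀ hmR (by norm_num : (0:ℝ) < 4)]
    have h1 : (4:ℝ)/ε ≤ (m:ℝ) := by
      have h2 := Nat.le_ceil ((4:ℝ)/ε)
      have h3 : ((⌈(4:ℝ)/ε⌉₊ : ℕ) : ℝ) ≤ (m:ℝ) := by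
        exact_mod_cast (by omega : ⌈(4:ℝ)/ε⌉₊ ≤ m)
      linarith
    have h4 : (4:ℝ) ≤ (m:ℝ)*ε := (div_le_iff₀ hε).mp h1
    linarith
  set c := Real.log (4*(m:ℝ)) with hc
  have hc0 : 0 ≤ c := Real.log_nonneg (by
    have : (1:ℝ) ≤ (m:ℝ) := by exact_mod_cast hm1
    linarith)
  have hlogto : Tendsto (fun n : ℕ => Real.log n) atTop atTop :=
    Real.tendsto_log_atTop.comp tendsto_natCast_atTop_atTop
  obtain ⟨N0, hN0⟩ := Filter.eventually_atTop.mp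
    (hlogto.eventually_ge_atTop (max ((4:ℝ)/ε) (4*(c+1)/ε)))
  refine ⟨max N0 2, fun n hn => ?_⟩
  have hn2 : 2 ≤ n := le_trans (le_max_right _ _) hn
  have hLmax := hN0 n (le_trans (le_max_left _ _) hn)
  set L := Real.log n with hLdef
  have hLa : (4:ℝ)/ε ≤ L := le_trans (le_max_left _ _) hLmax
  have hLb : 4*(c+1)/ε ≤ L := le_trans (le_max_right _ _) hLmax
  have hL0 : 0 < L := lt_of_lt_of_le (by positivity) hLa
  have hup := lambda_upper n hn2
  have hlo := lambda_lower n m hn2 hm1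
  rw [← hδ, ← hc] at hlo
  set Λ := ∑' k : ℕ, ((k : ℝ) + 1)⁻¹ * collisionProb (k + 1) n with hΛ
  rw [Real.dist_eq, abs_lt]
  have hεLa : (4:ℝ) ≤ ε*L := by
    have := (div_le_iff₀ hε).mp hLa
    linarith
  have hεLb : 4*(c+1) ≤ ε*L := by
    have := (div_le_iff₀ hε).mp hLb
    linarith
  constructor
  · have h4 : (2-ε)*L < (1-δ)*(2*L - c) := by
      nlinarith [mul_le_mul_of_nonneg_right hδε (le_of_lt hL0),
        mul_nonneg hδ0.le hc0]
    have h5 : (2-ε)*L < Λ := lt_of_lt_of_le h4 hlo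
    have h6 : 2-ε < Λ/L := (lt_div_iff₀ hL0).mpr h5
    linarith
  · have h4 : Λ < (2+ε)*L := by nlinarith
    have h5 : Λ/L < 2+ε := (div_lt_iff₀ hL0).mpr h4
    linarith
end

section
/- With $d_\lambda$ as in the definition of the modified Skorokhod metric, if $x_n, x \in D[0,T]$ and $d_\lambda(x_n, x) \to 0$, then for every bounded continuous function $g : [0,T] \times \mathbb{R} \to \mathbb{R}$, $\int_0^T g(s, x_n(s))\, ds \to \int_0^T g(s, x(s))\, ds$, and moreover $x_n(T) \to x(T)$. -/
open MeasureTheory Set Filter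
open scoped ENNReal

/-- A real function is càdlàg on `[0,T]`: right-continuous on `[0,T)` and with left
limits on `(0,T]`. -/
def IsCadlagOn (x : ℝ → ℝ) (T : ℝ) : Prop :=
  (∀ t ∈ Set.Ico (0 : ℝ) T, Tendsto x (nhdsWithin t (Set.Ici t)) (nhds (x t))) ∧
  (∀ t ∈ Set.Ioc (0 : ℝ) T, ∃ L : ℝ, Tendsto x (nhdsWithin t (Set.Iio t)) (nhds L))

/-- A Skorokhod reparameterisation of time on `[0,T]`: a strictly increasing continuous
map of `[0,T]` onto itself (hence with continuous inverse). -/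
def IsSRT (T : ℝ) (f : ℝ → ℝ) : Prop :=
  StrictMonoOn f (Set.Icc 0 T) ∧ ContinuousOn f (Set.Icc 0 T) ∧
    f 0 = 0 ∧ f T = T ∧ Set.MapsTo f (Set.Icc 0 T) (Set.Icc 0 T)

/-- Membership in `𝓘`: a finite union of half-open intervals `[a,b) ⊆ [0,T]`. -/
def IsFinUnionIco (T : ℝ) (A : Set ℝ) : Prop :=
  ∃ s : Finset (ℝ × ℝ), (∀ p ∈ s, 0 ≤ p.1 ∧ p.1 < p.2 ∧ p.2 ≤ T) ∧
    A = ⋃ p ∈ s, Set.Ico p.1 p.2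

/-- The uniform norm of a function over `[0,T]`. -/
noncomputable def unifNorm (T : ℝ) (y : ℝ → ℝ) : ℝ := ⨆ t : Set.Icc (0 : ℝ) T, |y t|

/-- The modified Skorokhod metric
`d_λ(x₁,x₂) = inf_{A ∈ 𝓘, f ∈ 𝓕} ‖𝟙_A (x₁ - x₂∘f)‖ ∨ ‖Id - f‖ ∨ λ([0,T]∖A) ∨ |x₁(T)-x₂(T)|`. -/
noncomputable def dLambda (T : ℝ) (x₁ x₂ : ℝ → ℝ) : ℝ :=
  sInf { d : ℝ | ∃ A : Set ℝ, ∃ f : ℝ → ℝ, IsFinUnionIco T A ∧ IsSRT T f ∧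
    d = max (max (unifNorm T (Set.indicator A fun t => x₁ t - x₂ (f t)))
              (unifNorm T fun t => t - f t))
          (max ((volume (Set.Icc (0 : ℝ) T \ A)).toReal) |x₁ T - x₂ T|) }

section Aux

lemma cadlag_bdd {x : ℝ → ℝ} {T : ℝ} (hT : 0 < T) (hx : IsCadlagOn x T) :
    ∃ M : ℝ, ∀ t ∈ Set.Icc (0:ℝ) T, |x t| ≤ M := by
  classical
  have key : ∀ t ∈ Set.Icc (0:ℝ) T, ∃ U : Set ℝ, U ∈ nhds t ∧
      ∃ M, ∀ s ∈ U ∩ Set.Icc (0:ℝ) T, |x s| ≤ M := by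
    intro t ht
    have hright : ∃ δ₁ > (0:ℝ), ∀ s ∈ Set.Ico t (t + δ₁) ∩ Set.Icc (0:ℝ) T,
        |x s| ≤ |x t| + 1 := by
      rcases eq_or_lt_of_le ht.2 with hTt | hTt
      · refine ⟨1, one_pos, fun s hs => ?_⟩
        have hst : s = t := le_antisymm (hTt ▸ hs.2.2) hs.1.1
        rw [hst]; linarith [abs_nonneg (x t)]
      · have h := hx.1 t ⟨ht.1, hTt⟩
        have h2 : x ⁻¹' Metric.ball (x t) 1 ∈ nhdsWithin t (Set.Ici t) :=
          h (Metric.ball_mem_nhds _ one_pos)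
        rw [Metric.mem_nhdsWithin_iff] at h2
        obtain ⟨δ, hδ, hsub⟩ := h2
        refine ⟨δ, hδ, fun s hs => ?_⟩
        have hsball : s ∈ Metric.ball t δ ∩ Set.Ici t := by
          constructor
          · rw [Metric.mem_ball, Real.dist_eq, abs_lt]
            constructor <;> [linarith [hs.1.1, hs.1.2]; linarith [hs.1.1, hs.1.2]]
          · exact hs.1.1
        have := hsub hsball
        simp only [Set.mem_preimage, Metric.mem_ball, Real.dist_eq] at this
        have := abs_sub_abs_le_abs_sub (x s) (x t)
        linarith [abs_lt.1 ‹|x s - x t| < 1›]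
    have hleft : ∃ δ₂ > (0:ℝ), ∃ C, ∀ s ∈ Set.Ioo (t - δ₂) t ∩ Set.Icc (0:ℝ) T,
        |x s| ≤ C := by
      rcases eq_or_lt_of_le ht.1 with h0t | h0t
      · refine ⟨1, one_pos, 0, fun s hs => absurd (hs.1.2.trans_le (h0t ▸ hs.2.1)) (lt_irrefl s)⟩
      · obtain ⟨L, hL⟩ := hx.2 t ⟨h0t, ht.2⟩
        have h2 : x ⁻¹' Metric.ball L 1 ∈ nhdsWithin t (Set.Iio t) :=
          hL (Metric.ball_mem_nhds _ one_pos)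
        rw [Metric.mem_nhdsWithin_iff] at h2
        obtain ⟨δ, hδ, hsub⟩ := h2
        refine ⟨δ, hδ, |L| + 1, fun s hs => ?_⟩
        have hsball : s ∈ Metric.ball t δ ∩ Set.Iio t := by
          constructor
          · rw [Metric.mem_ball, Real.dist_eq, abs_lt]
            constructor <;> [linarith [hs.1.1, hs.1.2]; linarith [hs.1.1, hs.1.2]]
          · exact hs.1.2
        have := hsub hsball
        simp only [Set.mem_preimage, Metric.mem_ball, Real.dist_eq] at this
        have h3 := abs_sub_abs_le_abs_sub (x s) L
        linarith [abs_lt.1 ‹|x s - L| < 1›]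
    obtain ⟨δ₁, hδ₁, hR⟩ := hright
    obtain ⟨δ₂, hδ₂, C, hLft⟩ := hleft
    refine ⟨Set.Ioo (t - δ₂) (t + δ₁), isOpen_Ioo.mem_nhds ⟨by linarith, by linarith⟩,
      max (|x t| + 1) C, fun s hs => ?_⟩
    rcases lt_or_ge s t with hst | hst
    · exact le_max_of_le_right (hLft s ⟨⟨hs.1.1, hst⟩, hs.2⟩)
    · exact le_max_of_le_left (hR s ⟨⟨hst, hs.1.2⟩, hs.2⟩)
  choose! U hU M hM using key
  obtain ⟨ts, hts, hcover⟩ :=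
    (isCompact_Icc : IsCompact (Set.Icc (0:ℝ) T)).elim_nhds_subcover U (fun t ht => hU t ht)
  rcases ts.eq_empty_or_nonempty with rfl | hne
  · exfalso
    have h0 : (0:ℝ) ∈ Set.Icc (0:ℝ) T := ⟨le_refl _, hT.le⟩
    simpa using hcover h0
  · refine ⟨ts.sup' hne M, fun s hs => ?_⟩
    obtain ⟨i, hi, hsi⟩ := Set.mem_iUnion₂.1 (hcover hs)
    exact le_trans (hM i (hts i hi) s ⟨hsi, hs⟩) (Finset.le_sup' M hi)

lemma cadlag_aemeasurable {x : ℝ → ℝ} {T : ℝ} (hx : IsCadlagOn x T) :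
    AEMeasurable x (volume.restrict (Set.Ioc (0:ℝ) T)) := by
  set θ : ℕ → ℝ → ℝ := fun k t => min T ((⌊t * 2^k⌋ + 1) / 2^k) with hθ
  have hmeas : ∀ k, Measurable fun t => x (θ k t) := by
    intro k
    have : (fun t => x (θ k t)) =
        (fun m : ℤ => x (min T ((m + 1) / 2^k))) ∘ fun t => ⌊t * 2^k⌋ := rfl
    rw [this]
    exact measurable_from_top.comp (measurable_id.mul_const _).floor
  have hconv : ∀ t ∈ Set.Ico (0:ℝ) T, Tendsto (fun k => x (θ k t)) atTop (nhds (x t)) := by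
    intro t ht
    have h2k : ∀ k : ℕ, (0:ℝ) < 2^k := fun k => pow_pos two_pos k
    have hge : ∀ k, t ≤ θ k t := by
      intro k
      refine le_min ht.2.le ?_
      rw [le_div_iff₀ (h2k k)]
      exact (Int.lt_floor_add_one (t * 2^k)).le
    have hle : ∀ k, θ k t ≤ t + ((2:ℝ)^k)⁻¹ := by
      intro k
      refine (min_le_right _ _).trans ?_
      rw [div_le_iff₀ (h2k k)]
      have h1 := Int.floor_le (t * 2^k)
      have : (t + ((2:ℝ)^k)⁻¹) * 2^k = t * 2^k + 1 := by
        field_simp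
      rw [this]
      linarith
    have hlim : Tendsto (fun k : ℕ => t + ((2:ℝ)^k)⁻¹) atTop (nhds t) := by
      have h2 : Tendsto (fun k : ℕ => ((2:ℝ)^k)⁻¹) atTop (nhds 0) := by
        simpa using tendsto_pow_atTop_nhds_zero_of_lt_one (by norm_num : (0:ℝ) ≤ 2⁻¹)
          (by norm_num : (2:ℝ)⁻¹ < 1) |>.congr (fun k => by rw [inv_pow])
      simpa using tendsto_const_nhds.add h2
    have htend : Tendsto (fun k => θ k t) atTop (nhdsWithin t (Set.Ici t)) := by
      refine tendsto_nhdsWithin_of_tendsto_nhds_of_eventually_within _ ?_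
        (Eventually.of_forall fun k => hge k)
      exact tendsto_of_tendsto_of_tendsto_of_le_of_le tendsto_const_nhds hlim hge hle
    exact (hx.1 t ht).comp htend
  have hae : ∀ᵐ t ∂(volume.restrict (Set.Ioc (0:ℝ) T)), t ∈ Set.Ico (0:ℝ) T := by
    have h1 : ∀ᵐ t : ℝ ∂(volume.restrict (Set.Ioc (0:ℝ) T)), t ≠ T := by
      rw [ae_iff]
      refine measure_mono_null (fun t ht => ?_)
        (by simp : (volume.restrict (Set.Ioc (0:ℝ) T)) {T} = 0)
      simp only [Set.mem_setOf_eq, not_not] at ht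
      simp [ht]
    have h2 : ∀ᵐ t : ℝ ∂(volume.restrict (Set.Ioc (0:ℝ) T)), t ∈ Set.Ioc (0:ℝ) T :=
      ae_restrict_mem measurableSet_Ioc
    filter_upwards [h1, h2] with t h1 h2
    exact ⟨h2.1.le, lt_of_le_of_ne h2.2 h1⟩
  refine aemeasurable_of_tendsto_metrizable_ae atTop (fun k => (hmeas k).aemeasurable) ?_
  filter_upwards [hae] with t ht using hconv t ht

lemma cadlag_countable_discont {x : ℝ → ℝ} {T : ℝ} (hx : IsCadlagOn x T) :
    ∃ D : Set ℝ, D.Countable ∧ ∀ t ∈ Set.Ioo (0:ℝ) T, t ∉ D → ContinuousAt x t := by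
  classical
  set D : Set ℝ :=
    {t | t ∈ Set.Ioo (0:ℝ) T ∧ ¬ Tendsto x (nhdsWithin t (Set.Iio t)) (nhds (x t))} with hD
  refine ⟨D, ?_, fun t ht htD => ?_⟩
  · choose! L hL using hx.2
    have hLD : ∀ t ∈ D, x t ≠ L t := by
      intro t htD heq
      exact htD.2 (heq ▸ hL t ⟨htD.1.1, htD.1.2.le⟩)
    have hsub : D ⊆ ⋃ k : ℕ, {t | t ∈ D ∧ 1/((k:ℝ)+1) < |x t - L t|} := by
      intro t htD
      have hpos : 0 < |x t - L t| := abs_pos.2 (sub_ne_zero.2 (hLD t htD))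
      obtain ⟨k, hk⟩ := exists_nat_one_div_lt hpos
      exact Set.mem_iUnion.2 ⟨k, htD, hk⟩
    refine Set.Countable.mono hsub (Set.countable_iUnion fun k => ?_)
    set e := 1/((k:ℝ)+1) with he
    have hepos : 0 < e := by positivity
    set S := {t | t ∈ D ∧ e < |x t - L t|} with hS
    have hQ : ∀ t ∈ S, ∃ r : ℚ, (r:ℝ) < t ∧ ∀ s ∈ Set.Ioo (r:ℝ) t, |x s - L t| < e/4 := by
      rintro t ⟨htD, hte⟩
      have hL' := hL t ⟨htD.1.1, htD.1.2.le⟩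
      have h2 : x ⁻¹' Metric.ball (L t) (e/4) ∈ nhdsWithin t (Set.Iio t) :=
        hL' (Metric.ball_mem_nhds _ (by positivity))
      rw [Metric.mem_nhdsWithin_iff] at h2
      obtain ⟨δ, hδ, hsubb⟩ := h2
      obtain ⟨r, hr1, hr2⟩ := exists_rat_btwn (sub_lt_self t hδ)
      refine ⟨r, hr2, fun s hs => ?_⟩
      have : s ∈ Metric.ball t δ ∩ Set.Iio t := by
        constructor
        · rw [Metric.mem_ball, Real.dist_eq, abs_lt]
          constructor <;> [linarith [hs.1, hs.2]; linarith [hs.1, hs.2]]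
        · exact hs.2
      have := hsubb this
      simpa [Real.dist_eq] using this
    set F : ℝ → ℚ := fun t => if h : ∃ r : ℚ, (r:ℝ) < t ∧
        ∀ s ∈ Set.Ioo (r:ℝ) t, |x s - L t| < e/4 then h.choose else 0 with hF
    have hFspec : ∀ t ∈ S, (F t : ℝ) < t ∧ ∀ s ∈ Set.Ioo ((F t):ℝ) t, |x s - L t| < e/4 := by
      intro t htS
      have h := hQ t htS
      simp only [hF, dif_pos h]
      exact h.choose_spec
    have hkey : ∀ a ∈ S, ∀ b ∈ S, a < b → F a ≠ F b := by
      intro a ha b hb hab heq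
      obtain ⟨hra, hQa⟩ := hFspec a ha
      obtain ⟨hrb, hQb⟩ := hFspec b hb
      rw [heq] at hra hQa
      set r : ℝ := (F b : ℝ) with hr
      set s₀ := (r + a)/2 with hs₀
      have hs₀mem : s₀ ∈ Set.Ioo r a :=
        ⟨by simp only [hs₀]; linarith, by simp only [hs₀]; linarith⟩
      have h1 := hQa s₀ hs₀mem
      have h2 := hQb s₀ ⟨hs₀mem.1, hs₀mem.2.trans hab⟩
      have h3 := hQb a ⟨hra, hab⟩
      have h4 : |x a - L a| ≤ |x a - L b| + (|x s₀ - L b| + |x s₀ - L a|) := by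
        have heq2 : x a - L a = ((x a - L b) - (x s₀ - L b)) + (x s₀ - L a) := by ring
        rw [heq2]
        refine (abs_add_le _ _).trans ?_
        have := abs_sub (x a - L b) (x s₀ - L b)
        linarith
      have h5 : e < |x a - L a| := ha.2
      linarith
    have hinj : Set.InjOn (fun t => Encodable.encode (F t)) S := by
      intro a ha b hb hab
      have heq : F a = F b := Encodable.encode_injective hab
      rcases lt_trichotomy a b with h | h | h
      · exact absurd heq (hkey a ha b hb h)
      · exact h
      · exact absurd heq.symm (hkey b hb a ha h)
    exact Set.countable_iff_exists_injOn.2 ⟨_, hinj⟩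
  · have hleft : Tendsto x (nhdsWithin t (Set.Iio t)) (nhds (x t)) := by
      by_contra h
      exact htD ⟨ht, h⟩
    have hright : Tendsto x (nhdsWithin t (Set.Ici t)) (nhds (x t)) := hx.1 t ⟨ht.1.le, ht.2⟩
    rw [ContinuousAt, ← nhdsLT_sup_nhdsGE t, tendsto_sup]
    exact ⟨hleft, hright⟩

lemma IsFinUnionIco.measurableSet {T : ℝ} {A : Set ℝ} (h : IsFinUnionIco T A) :
    MeasurableSet A := by
  obtain ⟨s, -, rfl⟩ := h
  exact (Finset.finite_toSet s).measurableSet_biUnion (fun p _ => measurableSet_Ico)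

lemma le_unifNorm {T : ℝ} (hT : 0 < T) {y : ℝ → ℝ} {M : ℝ}
    (hbd : ∀ s ∈ Set.Icc (0:ℝ) T, |y s| ≤ M) {t : ℝ} (ht : t ∈ Set.Icc (0:ℝ) T) :
    |y t| ≤ unifNorm T y := by
  have : Nonempty (Set.Icc (0:ℝ) T) := ⟨⟨0, le_refl _, hT.le⟩⟩
  exact le_ciSup (f := fun s : Set.Icc (0:ℝ) T => |y s|)
    ⟨M, by rintro _ ⟨s, rfl⟩; exact hbd s s.2⟩ ⟨t, ht⟩

lemma dLambda_witness {T : ℝ} (hT : 0 < T) (x₁ x₂ : ℝ → ℝ) {ε : ℝ}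
    (hε : dLambda T x₁ x₂ < ε) :
    ∃ A f, IsFinUnionIco T A ∧ IsSRT T f ∧
      unifNorm T (Set.indicator A fun t => x₁ t - x₂ (f t)) < ε ∧
      unifNorm T (fun t => t - f t) < ε ∧
      (volume (Set.Icc (0:ℝ) T \ A)).toReal < ε ∧ |x₁ T - x₂ T| < ε := by
  classical
  set Sd := { d : ℝ | ∃ A : Set ℝ, ∃ f : ℝ → ℝ, IsFinUnionIco T A ∧ IsSRT T f ∧
    d = max (max (unifNorm T (Set.indicator A fun t => x₁ t - x₂ (f t)))
              (unifNorm T fun t => t - f t))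
          (max ((volume (Set.Icc (0 : ℝ) T \ A)).toReal) |x₁ T - x₂ T|) } with hSd
  have hne : Sd.Nonempty := by
    refine ⟨_, Set.Ico 0 T, id, ⟨{((0:ℝ),T)}, ?_, by simp⟩,
      ⟨fun a _ b _ h => h, continuousOn_id, rfl, rfl, fun s hs => hs⟩, rfl⟩
    intro p hp
    simp only [Finset.mem_singleton] at hp
    subst hp
    exact ⟨le_refl _, hT, le_refl _⟩
  have hbdd : BddBelow Sd := by
    refine ⟨0, fun d hd => ?_⟩
    obtain ⟨A, f, -, -, rfl⟩ := hd
    exact le_trans (abs_nonneg _) (le_trans (le_max_right _ _) (le_max_right _ _))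
  obtain ⟨d, hd, hdε⟩ := (csInf_lt_iff hbdd hne).1 hε
  obtain ⟨A, f, hA, hf, rfl⟩ := hd
  refine ⟨A, f, hA, hf, ?_, ?_, ?_, ?_⟩
  · exact lt_of_le_of_lt (le_trans (le_max_left _ _) (le_max_left _ _)) hdε
  · exact lt_of_le_of_lt (le_trans (le_max_right _ _) (le_max_left _ _)) hdε
  · exact lt_of_le_of_lt (le_trans (le_max_left _ _) (le_max_right _ _)) hdε
  · exact lt_of_le_of_lt (le_trans (le_max_right _ _) (le_max_right _ _)) hdε

end Aux

/-- If `x_n, x ∈ D[0,T]` and `d_λ(x_n, x) → 0`, then for every bounded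
continuous `g : [0,T] × ℝ → ℝ`, `∫_0^T g(s, x_n(s)) ds → ∫_0^T g(s, x(s)) ds`, and
moreover `x_n(T) → x(T)`. -/
theorem dLambda_tendsto_implies_meyer_zheng (T : ℝ) (hT : 0 < T)
    (xs : ℕ → ℝ → ℝ) (x : ℝ → ℝ)
    (hxs : ∀ n, IsCadlagOn (xs n) T) (hx : IsCadlagOn x T)
    (hconv : Tendsto (fun n => dLambda T (xs n) x) atTop (nhds 0)) :
    (∀ g : ℝ × ℝ → ℝ, Continuous g → (∃ M : ℝ, ∀ p : ℝ × ℝ, |g p| ≤ M) →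
      Tendsto (fun n => ∫ s in (0 : ℝ)..T, g (s, xs n s)) atTop
        (nhds (∫ s in (0 : ℝ)..T, g (s, x s)))) ∧
    Tendsto (fun n => xs n T) atTop (nhds (x T)) := by
  classical
  obtain ⟨Mx, hMx⟩ := cadlag_bdd hT hx
  choose Mn hMn using fun n => cadlag_bdd hT (hxs n)
  set ε : ℕ → ℝ := fun n => |dLambda T (xs n) x| + 1/((n:ℝ)+1) with hεdef
  have hεpos : ∀ n, dLambda T (xs n) x < ε n := by
    intro n
    have h1 : (0:ℝ) < 1/((n:ℝ)+1) := by positivity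
    have h2 := le_abs_self (dLambda T (xs n) x)
    simp only [hεdef]
    linarith
  have hε0 : Tendsto ε atTop (nhds 0) := by
    have h1 : Tendsto (fun n => |dLambda T (xs n) x|) atTop (nhds 0) := by
      simpa only [abs_zero] using hconv.abs
    simpa only [add_zero] using h1.add tendsto_one_div_add_atTop_nhds_zero_nat
  choose A f hA hf h1 h2 h3 h4 using fun n => dLambda_witness hT (xs n) x (hεpos n)
  have hfmaps : ∀ n, Set.MapsTo (f n) (Set.Icc 0 T) (Set.Icc 0 T) := fun n => (hf n).2.2.2.2
  have hpt1 : ∀ n, ∀ t ∈ Set.Icc (0:ℝ) T, t ∈ A n → |xs n t - x (f n t)| < ε n := by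
    intro n t ht htA
    have hb : ∀ s ∈ Set.Icc (0:ℝ) T,
        |Set.indicator (A n) (fun t => xs n t - x (f n t)) s| ≤ Mn n + Mx := by
      intro s hs
      by_cases hsA : s ∈ A n
      · rw [Set.indicator_of_mem hsA]
        exact (abs_sub _ _).trans (add_le_add (hMn n s hs) (hMx _ (hfmaps n hs)))
      · rw [Set.indicator_of_notMem hsA, abs_zero]
        have ha := (abs_nonneg (xs n 0)).trans (hMn n 0 ⟨le_refl _, hT.le⟩)
        have hb := (abs_nonneg (x 0)).trans (hMx 0 ⟨le_refl _, hT.le⟩)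
        linarith
    have := le_unifNorm hT hb ht
    rw [Set.indicator_of_mem htA] at this
    exact this.trans_lt (h1 n)
  have hpt2 : ∀ n, ∀ t ∈ Set.Icc (0:ℝ) T, |t - f n t| < ε n := by
    intro n t ht
    have hb : ∀ s ∈ Set.Icc (0:ℝ) T, |s - f n s| ≤ T + T := by
      intro s hs
      refine (abs_sub _ _).trans (add_le_add ?_ ?_)
      · rw [abs_of_nonneg hs.1]; exact hs.2
      · have hfm := hfmaps n hs
        rw [abs_of_nonneg hfm.1]; exact hfm.2
    exact (le_unifNorm hT hb ht).trans_lt (h2 n)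
  constructor
  · rintro g hg ⟨M, hM⟩
    simp only [intervalIntegral.integral_of_le hT.le]
    haveI : IsFiniteMeasure (volume.restrict (Set.Ioc (0:ℝ) T)) :=
      ⟨by rw [Measure.restrict_apply_univ]; exact measure_Ioc_lt_top⟩
    obtain ⟨D, hDc, hDcont⟩ := cadlag_countable_discont hx
    have hDnull : ∀ᵐ t ∂(volume.restrict (Set.Ioc (0:ℝ) T)), t ∉ D ∪ {T} := by
      have hz : (volume.restrict (Set.Ioc (0:ℝ) T)) (D ∪ {T}) = 0 := by
        have hv : volume (D ∪ {T}) = 0 :=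
          measure_union_null (hDc.measure_zero _) (measure_singleton _)
        exact le_antisymm (le_trans (Measure.restrict_apply_le _ _) hv.le) (zero_le)
      have hset : {a : ℝ | ¬ a ∉ D ∪ {T}} = D ∪ {T} := by
        ext a; exact not_not
      rw [ae_iff, hset]
      exact hz
    refine tendsto_of_subseq_tendsto fun ns hns => ?_
    obtain ⟨φ, hφm, hφ⟩ := extraction_forall_of_eventually
      (P := fun j k => ε (ns k) < (1/2:ℝ)^j)
      (fun j => (hε0.comp hns).eventually_lt_const (by positivity : (0:ℝ) < (1/2:ℝ)^j))
    set m : ℕ → ℕ := fun j => ns (φ j) with hm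
    set E : ℕ → Set ℝ := fun j => Set.Icc (0:ℝ) T \ A (m j) with hE
    have hEsum : ∑' j, (volume.restrict (Set.Ioc (0:ℝ) T)) (E j) ≠ ⊤ := by
      have hle : ∀ j, (volume.restrict (Set.Ioc (0:ℝ) T)) (E j) ≤
          ENNReal.ofReal ((1/2:ℝ)^j) := by
        intro j
        have hfin : volume (E j) ≠ ⊤ :=
          ((measure_mono Set.diff_subset).trans_lt measure_Icc_lt_top).ne
        have h5 : (volume (E j)).toReal ≤ (1/2:ℝ)^j := ((h3 (m j)).trans (hφ j)).le
        calc (volume.restrict (Set.Ioc (0:ℝ) T)) (E j) ≤ volume (E j) :=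
              Measure.restrict_apply_le _ _
          _ = ENNReal.ofReal (volume (E j)).toReal := (ENNReal.ofReal_toReal hfin).symm
          _ ≤ ENNReal.ofReal ((1/2:ℝ)^j) := ENNReal.ofReal_le_ofReal h5
      refine ne_top_of_le_ne_top ?_ (ENNReal.tsum_le_tsum hle)
      have heq : ∀ j : ℕ, ENNReal.ofReal ((1/2:ℝ)^j) = (2:ℝ≥0∞)⁻¹ ^ j := by
        intro j
        rw [ENNReal.ofReal_pow (by norm_num), one_div,
          ENNReal.ofReal_inv_of_pos two_pos]
        norm_num
      rw [tsum_congr heq, ENNReal.tsum_geometric, ENNReal.one_sub_inv_two]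
      simp
    have hBC : ∀ᵐ t ∂(volume.restrict (Set.Ioc (0:ℝ) T)), {j | t ∈ E j}.Finite :=
      ae_finite_setOf_mem hEsum
    have htmem : ∀ᵐ t ∂(volume.restrict (Set.Ioc (0:ℝ) T)), t ∈ Set.Ioc (0:ℝ) T :=
      ae_restrict_mem measurableSet_Ioc
    have hae : ∀ᵐ t ∂(volume.restrict (Set.Ioc (0:ℝ) T)),
        Tendsto (fun j => xs (m j) t) atTop (nhds (x t)) := by
      filter_upwards [hBC, hDnull, htmem] with t hfin htD htIoc
      have htT : t ≠ T := fun h => htD (Or.inr (by simp [h]))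
      have htIoo : t ∈ Set.Ioo (0:ℝ) T := ⟨htIoc.1, lt_of_le_of_ne htIoc.2 htT⟩
      have htIcc : t ∈ Set.Icc (0:ℝ) T := ⟨htIoo.1.le, htIoo.2.le⟩
      have hcont : ContinuousAt x t := hDcont t htIoo (fun h => htD (Or.inl h))
      have htA : ∀ᶠ j in atTop, t ∈ A (m j) := by
        obtain ⟨N, hN⟩ := hfin.bddAbove
        rw [eventually_atTop]
        refine ⟨N+1, fun j hj => ?_⟩
        by_contra hnA
        have : j ∈ {j | t ∈ E j} := ⟨htIcc, hnA⟩
        have := hN this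
        omega
      have hppow : Tendsto (fun j : ℕ => ((1:ℝ)/2)^j) atTop (nhds 0) :=
        tendsto_pow_atTop_nhds_zero_of_lt_one (by norm_num) (by norm_num)
      have hfconv : Tendsto (fun j => f (m j) t) atTop (nhds t) := by
        rw [tendsto_iff_dist_tendsto_zero]
        refine squeeze_zero (fun j => dist_nonneg) (fun j => ?_) hppow
        rw [Real.dist_eq, abs_sub_comm]
        exact ((hpt2 (m j) t htIcc).trans (hφ j)).le
      have h2' : Tendsto (fun j => x (f (m j) t)) atTop (nhds (x t)) :=
        hcont.tendsto.comp hfconv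
      have h3' : Tendsto (fun j => xs (m j) t - x (f (m j) t)) atTop (nhds 0) := by
        rw [tendsto_zero_iff_norm_tendsto_zero]
        refine squeeze_zero' (Eventually.of_forall fun j => norm_nonneg _) ?_ hppow
        filter_upwards [htA] with j hjA
        rw [Real.norm_eq_abs]
        exact ((hpt1 (m j) t htIcc hjA).trans (hφ j)).le
      have := h3'.add h2'
      simpa using this
    refine ⟨φ, ?_⟩
    refine tendsto_integral_of_dominated_convergence (fun _ => M) ?_ (integrable_const M) ?_ ?_
    · intro j
      exact (hg.measurable.comp_aemeasurable (aemeasurable_id.prodMk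
        (cadlag_aemeasurable (hxs (m j))))).aestronglyMeasurable
    · intro j
      exact Eventually.of_forall fun t => by
        simpa [Real.norm_eq_abs] using hM (t, xs (m j) t)
    · filter_upwards [hae] with t ht
      exact (hg.tendsto (t, x t)).comp (tendsto_const_nhds.prodMk_nhds ht)
  · rw [tendsto_iff_dist_tendsto_zero]
    refine squeeze_zero (fun n => dist_nonneg) (fun n => ?_) hε0
    rw [Real.dist_eq]
    exact (h4 n).le
end
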